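/- arXiv:2210.15276 — 3 statements merged into one kernel-verified Lean document; each statement's English description precedes it below -/
import Mathlib

section
/- The action Ψ generated by all coordinate permutations T_σ and all translations S_α of the group X=(ℤ/2)^ℕ with Haar measure belongs to the class S(2m,2m+1) for every m≥1, but Ψ does not possess the JR-property; in fact Ψ ∉ S(3,4). -/
open MeasureTheory Filter Set
open scoped ENNReal symmDiff

section Defs

variable {α : Type*} [MeasurableSpace α]

/-- The class `S(m,n)`: every self-joining of order `n` (a measure on `X^n` with all
coordinate projections equal to `μ`, invariant under the diagonal action of `T`) whose
projections onto all `m`-dimensional faces equal `μ^m` coincides with the product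
measure `μ^n`. -/
def InS (μ : Measure α) [IsFiniteMeasure μ] (T : α → α) (m n : ℕ) : Prop :=
  ∀ ν : Measure (Fin n → α),
    (∀ i, Measure.map (fun x => x i) ν = μ) →
    (Measure.map (fun x i => T (x i)) ν = ν) →
    (∀ e : Fin m → Fin n, Function.Injective e →
      Measure.map (fun x i => x (e i)) ν = Measure.pi fun _ => μ) →
    ν = Measure.pi fun _ => μ

/-- The JR-property: for every `n > 2`, the only pairwise independent self-joining of
order `n` is the product measure, i.e. membership in `S(2,n)` for all `n > 2`. -/
def JRProperty (μ : Measure α) [IsFiniteMeasure μ] (T : α → α) : Prop :=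
  ∀ n : ℕ, 2 < n → InS μ T 2 n

/-- Weak mixing: the diagonal product `T × T` is ergodic for `μ ⊗ μ`. -/
def WeaklyMixing (μ : Measure α) (T : α → α) : Prop :=
  Ergodic (fun p : α × α => (T p.1, T p.2)) (μ.prod μ)

/-- Partial sums `k₁ + ⋯ + k_i` of an `n`-tuple of natural numbers. -/
def cumSum {n : ℕ} (k : Fin n → ℕ) (i : Fin (n + 1)) : ℕ :=
  ∑ l : Fin n, if (l : ℕ) < (i : ℕ) then k l else 0

/-- Mixing of multiplicity `n`:
`μ(A₀ ∩ T^{-k₁}A₁ ∩ T^{-(k₁+k₂)}A₂ ∩ ⋯) → μ(A₀)⋯μ(A_n)` as `k₁,…,k_n → ∞`. -/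
def MixingOfOrder (μ : Measure α) (T : α → α) (n : ℕ) : Prop :=
  ∀ A : Fin (n + 1) → Set α, (∀ i, MeasurableSet (A i)) →
    Tendsto (fun k : Fin n → ℕ => μ (⋂ i, T^[cumSum k i] ⁻¹' A i))
      atTop (nhds (∏ i, μ (A i)))

/-- Convergence of (Koopman operators of) a sequence of transformations to `Θ`
in the weak operator topology, expressed on indicators of measurable sets. -/
def TendstoWeakTheta (μ : Measure α) (T : ℕ → α → α) : Prop :=
  ∀ A B : Set α, MeasurableSet A → MeasurableSet B →
    Tendsto (fun j => μ ((T j) ⁻¹' A ∩ B)) atTop (nhds (μ A * μ B))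

/-- A fixed countable family of measurable sets, dense in the measure algebra. -/
def DenseFamily (μ : Measure α) (A : ℕ → Set α) : Prop :=
  (∀ i, MeasurableSet (A i)) ∧
    ∀ B : Set α, MeasurableSet B → ∀ ε : ℝ, 0 < ε → ∃ i, (μ (B ∆ A i)).toReal < ε

/-- The Halmos metric `ρ(P,Q) = Σ_i 2^{-i} (μ(P A_i Δ Q A_i) + μ(P⁻¹ A_i Δ Q⁻¹ A_i))`
associated with a fixed dense family `{A_i}`. -/
noncomputable def halmosF (μ : Measure α) (A : ℕ → Set α) (P Q : α → α) : ℝ :=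
  ∑' i : ℕ, (2 : ℝ)⁻¹ ^ i *
    ((μ ((P '' A i) ∆ (Q '' A i))).toReal + (μ ((P ⁻¹' A i) ∆ (Q ⁻¹' A i))).toReal)

/-- A concrete metric `dist_w(·,Θ)` inducing the weak operator topology on Koopman
operators (relative to the dense family `{A_i}`): a weighted sum of the deviations of
the matrix coefficients `μ(T⁻¹A_i ∩ A_k)` from those `μ(A_i)μ(A_k)` of `Θ`. -/
noncomputable def distwTheta (μ : Measure α) (A : ℕ → Set α) (T : α → α) : ℝ :=
  ∑' p : ℕ × ℕ, (2 : ℝ)⁻¹ ^ (p.1 + p.2) *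
    |(μ (T ⁻¹' A p.1 ∩ A p.2)).toReal - (μ (A p.1)).toReal * (μ (A p.2)).toReal|

/-- Relative openness with respect to a distance function. -/
def IsOpenIn {β : Type*} (d : β → β → ℝ) (E U : Set β) : Prop :=
  U ⊆ E ∧ ∀ x ∈ U, ∃ ε : ℝ, 0 < ε ∧ ∀ y ∈ E, d x y < ε → y ∈ U

/-- Being a `Gδ` subset of `E` with respect to a distance function. -/
def IsGdeltaIn {β : Type*} (d : β → β → ℝ) (E G : Set β) : Prop :=
  ∃ U : ℕ → Set β, (∀ n, IsOpenIn d E (U n)) ∧ G = ⋂ n, U n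

/-- Being a dense subset of `E` with respect to a distance function. -/
def IsDenseIn {β : Type*} (d : β → β → ℝ) (E G : Set β) : Prop :=
  G ⊆ E ∧ ∀ x ∈ E, ∀ ε : ℝ, 0 < ε → ∃ y ∈ G, d x y < ε

end Defs

section Skew

variable {X Y : Type*}

/-- The skew product `R(x,y) = (Sx, R_x y)`. -/
def skewMap (S : X → X) (c : X → Y → Y) : X × Y → X × Y :=
  fun p => (S p.1, c p.1 p.2)

/-- The cocycle `C(x,p) = R_{S^{p-1}x} ∘ ⋯ ∘ R_{Sx} ∘ R_x` of a skew product. -/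
def cocycleF (S : X → X) (c : X → Y → Y) (x : X) : ℕ → Y → Y
  | 0 => id
  | p + 1 => c (S^[p] x) ∘ cocycleF S c x p

/-- The fiber transformation `R_x` of a skew product `R`. -/
def fib (R : X × Y → X × Y) (x : X) (y : Y) : Y := (R (x, y)).2

end Skew

/-- `Ext(S)`: all extensions of `S`, i.e. automorphisms of `(X×X, μ⊗μ)` of the form
`R(x,y) = (Sx, R_x y)` for a measurable family of `μ`-preserving automorphisms `{R_x}`. -/
def ExtSet {X : Type*} [MeasurableSpace X] (μ : Measure X) (S : X → X) :
    Set ((X × X) ≃ᵐ (X × X)) :=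
  {R | ∃ c : X → (X ≃ᵐ X), Measurable (fun p : X × X => c p.1 p.2) ∧
    (∀ x, MeasurePreserving (c x) μ μ) ∧ ∀ p : X × X, R p = (S p.1, c p.1 p.2)}

/-- The `(I,Θ)`-property of the cocycle of a skew product `R = (S, R_x)`:
there is a sequence `p_j → ∞` along which the cocycle is locally rigid
(on every set of positive measure, for a.e. point, a subsequence of the cocycle returns
to the identity while the base point returns to the set) and relatively mixing in measure
(`dist_w(C(x,p_j), Θ) < ε` on a set of measure tending to `1`). -/
def HasIThetaCocycle {X : Type*} [MeasurableSpace X] (μ : Measure X) (Afam : ℕ → Set X)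
    (S : X → X) (c : X → X → X) : Prop :=
  ∃ p : ℕ → ℕ, Tendsto p atTop atTop ∧
    (∀ A : Set X, MeasurableSet A → 0 < μ A →
      ∀ᵐ x ∂μ.restrict A, ∃ φ : ℕ → ℕ, StrictMono φ ∧ (∀ k, S^[p (φ k)] x ∈ A) ∧
        Tendsto (fun k => halmosF μ Afam (cocycleF S c x (p (φ k))) id) atTop (nhds 0)) ∧
    (∀ ε : ℝ, 0 < ε →
      Tendsto (fun j => μ {x | distwTheta μ Afam (cocycleF S c x (p j)) < ε})
        atTop (nhds 1))

/-- Relative mixing of multiplicity `n` for a skew product `R` on `X × Y`: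
the projection onto `L²(X,μ)⊗1` (i.e. the fiberwise `ν`-measure) of the indicator of
`H₀ ∩ R^{k₁}H₁ ∩ ⋯ ∩ R^{k₁+⋯+k_n}H_n`, for horizontal sets `H_i = X × B_i`,
converges in measure to the constant `ν(B₀)⋯ν(B_n)` as `k₁,…,k_n → ∞`. -/
def RelMixingOfOrder {X Y : Type*} [MeasurableSpace X] [MeasurableSpace Y]
    (μ : Measure X) (ν : Measure Y) (R : X × Y → X × Y) (n : ℕ) : Prop :=
  ∀ B : Fin (n + 1) → Set Y, (∀ i, MeasurableSet (B i)) → ∀ δ : ℝ, 0 < δ →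
    Tendsto (fun k : Fin n → ℕ =>
        μ {x | δ ≤ |(ν {y | ∀ i, (x, y) ∈ R^[cumSum k i] '' (Set.univ ×ˢ B i)}).toReal -
          ∏ i, (ν (B i)).toReal|})
      atTop (nhds 0)

/-- A generator of the action `Ψ`: a coordinate permutation `T_σ` or a translation `S_α`
of the group `X = (ℤ/2)^ℕ`. -/
def IsGenPsi (g : (ℕ → ZMod 2) → (ℕ → ZMod 2)) : Prop :=
  (∃ σ : Equiv.Perm ℕ, g = fun x i => x (σ i)) ∨ (∃ α : ℕ → ZMod 2, g = fun x => x + α)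

/-- The class `S(m,n)` for the group action `Ψ` generated by all coordinate permutations
and all translations of `(ℤ/2)^ℕ`: every order-`n` self-joining of the action whose
projections onto all `m`-dimensional faces equal `μ^m` is the product measure `μ^n`. -/
def InSPsi (μ : Measure (ℕ → ZMod 2)) [IsProbabilityMeasure μ] (m n : ℕ) : Prop :=
  ∀ ν : Measure (Fin n → (ℕ → ZMod 2)),
    (∀ i, Measure.map (fun x => x i) ν = μ) →
    (∀ g, IsGenPsi g → Measure.map (fun x i => g (x i)) ν = ν) →
    (∀ e : Fin m → Fin n, Function.Injective e →
      Measure.map (fun x i => x (e i)) ν = Measure.pi fun _ => μ) →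
    ν = Measure.pi fun _ => μ


/-!
A probability measure on `(ℤ/2)^(Fin n × ℕ)` is determined by its Walsh–Fourier coefficients,
and those of the Haar measure vanish off the trivial character.

Let `ν` be a `Ψ`-invariant self-joining of order `2m+1` whose `2m`-faces are independent.
Translation invariance kills every coefficient whose matrix has a column of odd weight. A nonzero
column of even weight has `2m+1` entries, hence a zero one, say in row `j₀`. Permutations of `ℕ`
move it to arbitrarily many fresh positions, giving characters with one and the same coefficient
`c`; they are orthonormal in `L²(ν)`, since the product of two of them vanishes in row `j₀` and
is therefore integrated against the product measure on the face omitting `j₀`. Bessel's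
inequality forces `c = 0`.

For odd `n`, the law of `(u₁, …, uₙ, u₁ + ⋯ + uₙ)` with independent Haar-distributed `uₖ` is
`Ψ`-invariant (a sum of an odd number of copies of `α` is `α`) and all its `n`-faces are
independent, but it is not the product measure. Taking `n = 3` disproves both `S(3,4)` and
`S(2,4)`.
-/

lemma ZMod.eq_zero_or_eq_one_of_two (z : ZMod 2) : z = 0 ∨ z = 1 := by revert z; decide

noncomputable def signChar : AddChar (ZMod 2) ℝ where
  toFun z := if z = 0 then 1 else -1
  map_zero_eq_one' := if_pos rfl
  map_add_eq_mul' a b := by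
    rcases a.eq_zero_or_eq_one_of_two with rfl | rfl <;>
      rcases b.eq_zero_or_eq_one_of_two with rfl | rfl <;> simp [show (1 + 1 : ZMod 2) = 0 from rfl]

lemma signChar_one : signChar 1 = -1 := by simp [signChar]

lemma signChar_add_one (z : ZMod 2) : signChar z + 1 = if z = 0 then 2 else 0 := by
  rcases z.eq_zero_or_eq_one_of_two with rfl | rfl <;> norm_num [signChar_one]

lemma norm_signChar_le (z : ZMod 2) : ‖signChar z‖ ≤ 1 := by
  rcases z.eq_zero_or_eq_one_of_two with rfl | rfl <;> simp [signChar_one]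

lemma signChar_sum {ι : Type*} (t : Finset ι) (g : ι → ZMod 2) :
    signChar (∑ i ∈ t, g i) = ∏ i ∈ t, signChar (g i) := by
  classical
  induction t using Finset.induction_on with
  | empty => simp
  | insert i t hi ih => rw [Finset.sum_insert hi, Finset.prod_insert hi, AddChar.map_add_eq_mul, ih]

lemma ZMod.mul_eq_ite_of_two (a x : ZMod 2) : a * x = if a = 1 then x else 0 := by
  rcases a.eq_zero_or_eq_one_of_two with rfl | rfl <;> simp

lemma ZMod.exists_eq_zero_of_sum_eq_zero_of_even {n : ℕ} (hn : Even n) {v : Fin (n + 1) → ZMod 2}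
    (hv : ∑ j, v j = 0) : ∃ j, v j = 0 := by
  by_contra! h
  have hone : ∀ j, v j = 1 := fun j => (v j).eq_zero_or_eq_one_of_two.resolve_left (h j)
  simp [hone, ZMod.natCast_eq_zero_iff_even.mpr hn] at hv

lemma Equiv.comp_swap_eq_self {α β : Type*} [DecidableEq α] {f : α → β} {i k : α} (h : f i = f k) :
    f ∘ Equiv.swap i k = f := by
  rw [Equiv.comp_swap_eq_update, h, Function.update_eq_self, ← h, Function.update_eq_self]

section Walsh

variable {Ω ι : Type*}

def cylinderSet (L : ι → Ω → ZMod 2) (S : Finset ι) (f : ι → ZMod 2) : Set Ω :=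
  {ω | ∀ i ∈ S, L i ω = f i}

noncomputable def walsh (L : ι → Ω → ZMod 2) (t : Finset ι) (ω : Ω) : ℝ :=
  signChar (∑ i ∈ t, L i ω)

variable {L : ι → Ω → ZMod 2}

@[simp]
lemma walsh_empty : walsh L ∅ = 1 := by
  ext ω; simp [walsh]

lemma indicator_cylinderSet_eq_sum_walsh [DecidableEq ι] (S : Finset ι) (f : ι → ZMod 2)
    (ω : Ω) : (cylinderSet L S f).indicator 1 ω =
      (2⁻¹ : ℝ) ^ S.card * ∑ t ∈ S.powerset, (∏ i ∈ t, signChar (f i)) * walsh L t ω := by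
  have hexpand : ∏ i ∈ S, (signChar (f i + L i ω) + 1) =
      ∑ t ∈ S.powerset, (∏ i ∈ t, signChar (f i)) * walsh L t ω := by
    rw [Finset.prod_add]
    refine Finset.sum_congr rfl fun t _ => ?_
    simp only [Finset.prod_const_one, mul_one, walsh, signChar_sum, AddChar.map_add_eq_mul,
      Finset.prod_mul_distrib]
  rw [← hexpand]
  simp only [signChar_add_one, Finset.prod_ite_zero, Finset.prod_const, CharTwo.add_eq_zero]
  by_cases hω : ω ∈ cylinderSet L S f
  · rw [Set.indicator_of_mem hω, if_pos fun i hi => (hω i hi).symm, ← mul_pow]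
    norm_num
  · rw [Set.indicator_of_notMem hω, if_neg fun h => hω fun i hi => (h i hi).symm, mul_zero]

lemma cylinderSet_inter_cylinderSet [DecidableEq ι] {S S' : Finset ι} {f f' : ι → ZMod 2}
    (h : ∀ i ∈ S, i ∈ S' → f i = f' i) :
    cylinderSet L S f ∩ cylinderSet L S' f' =
      cylinderSet L (S ∪ S') fun i => if i ∈ S then f i else f' i := by
  ext ω
  simp only [cylinderSet, Set.mem_inter_iff, Set.mem_ofPred_eq, Finset.mem_union]
  constructor
  · rintro ⟨hS, hS'⟩ i (hi | hi)
    · rw [if_pos hi, hS i hi]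
    · split_ifs with hiS
      exacts [hS i hiS, hS' i hi]
  · intro hω
    refine ⟨fun i hi => by simpa [hi] using hω i (.inl hi), fun i hi => ?_⟩
    by_cases hiS : i ∈ S
    · rw [← h i hiS hi]; simpa [hiS] using hω i (.inl hiS)
    · simpa [hiS] using hω i (.inr hi)

lemma isPiSystem_cylinderSet (L : ι → Ω → ZMod 2) :
    IsPiSystem (Set.range fun p : Finset ι × (ι → ZMod 2) => cylinderSet L p.1 p.2) := by
  classical
  rintro _ ⟨⟨S, f⟩, rfl⟩ _ ⟨⟨S', f'⟩, rfl⟩ ⟨ω, hωS, hωS'⟩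
  exact ⟨(S ∪ S', _), (cylinderSet_inter_cylinderSet fun i hi hi' =>
    (hωS i hi).symm.trans (hωS' i hi')).symm⟩

variable [MeasurableSpace Ω]

lemma measurable_walsh (hL : ∀ i, Measurable (L i)) (t : Finset ι) : Measurable (walsh L t) :=
  Measurable.of_discrete.comp (Finset.measurable_sum t fun i _ => hL i)

lemma memLp_walsh (hL : ∀ i, Measurable (L i)) (t : Finset ι) (p : ℝ≥0∞) (ν : Measure Ω)
    [IsFiniteMeasure ν] : MemLp (walsh L t) p ν :=
  .of_bound (measurable_walsh hL t).aestronglyMeasurable 1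
    (ae_of_all _ fun _ => norm_signChar_le _)

lemma measurableSet_cylinderSet (hL : ∀ i, Measurable (L i)) (S : Finset ι) (f : ι → ZMod 2) :
    MeasurableSet (cylinderSet L S f) := by
  have h : cylinderSet L S f = ⋂ i ∈ S, L i ⁻¹' {f i} := by ext; simp [cylinderSet]
  rw [h]
  exact S.measurableSet_biInter fun i _ => hL i (measurableSet_singleton (f i))

lemma measureReal_cylinderSet_eq_sum_integral_walsh [DecidableEq ι] (hL : ∀ i, Measurable (L i))
    (ν : Measure Ω) [IsFiniteMeasure ν] (S : Finset ι) (f : ι → ZMod 2) :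
    ν.real (cylinderSet L S f) =
      (2⁻¹ : ℝ) ^ S.card * ∑ t ∈ S.powerset, (∏ i ∈ t, signChar (f i)) * ∫ ω, walsh L t ω ∂ν := by
  have hint : ∀ t ∈ S.powerset, Integrable (fun ω => (∏ i ∈ t, signChar (f i)) * walsh L t ω) ν :=
    fun t _ => ((memLp_walsh hL t 1 ν).integrable le_rfl).const_mul _
  simp_rw [← integral_indicator_one (measurableSet_cylinderSet hL S f),
    indicator_cylinderSet_eq_sum_walsh, integral_const_mul, integral_finsetSum _ hint,
    integral_const_mul]

/-- The inversion formula on the cylinder `{L = 0 on t}` gives `∑ u ⊆ t, ∫ walsh L u ∂ν = 1`;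
induct on `t`. -/
lemma integral_walsh_eq_zero (ν : Measure Ω) [IsFiniteMeasure ν] (hL : ∀ i, Measurable (L i))
    (hν : ∀ S : Finset ι, ν (cylinderSet L S 0) = 2⁻¹ ^ S.card) {t : Finset ι} (ht : t.Nonempty) :
    ∫ ω, walsh L t ω ∂ν = 0 := by
  classical
  induction t using Finset.strongInduction with
  | H t ih =>
    have hsum : ∑ u ∈ t.powerset, ∫ ω, walsh L u ω ∂ν = 1 := by
      have h := measureReal_cylinderSet_eq_sum_integral_walsh hL ν t 0
      rw [measureReal_def, hν, ENNReal.toReal_pow, ENNReal.toReal_inv, ENNReal.toReal_ofNat] at h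
      simpa using h.symm
    have hlower : ∀ u ∈ (t.powerset.erase t).erase ∅, ∫ ω, walsh L u ω ∂ν = 0 := by
      intro u hu
      simp only [Finset.mem_erase, Finset.mem_powerset] at hu
      exact ih u (Finset.ssubset_iff_subset_ne.mpr ⟨hu.2.2, hu.2.1⟩)
        (Finset.nonempty_iff_ne_empty.mpr hu.1)
    rw [← Finset.add_sum_erase _ _ (Finset.mem_powerset_self t),
      ← Finset.add_sum_erase _ _
        (Finset.mem_erase.mpr ⟨ht.ne_empty.symm, Finset.empty_mem_powerset t⟩),
      Finset.sum_eq_zero hlower] at hsum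
    have huniv : ν.real univ = 1 := by
      simpa [measureReal_def, cylinderSet] using congrArg ENNReal.toReal (hν ∅)
    simp only [walsh_empty, Pi.one_apply, integral_const, smul_eq_mul, mul_one, huniv] at hsum
    linarith

lemma ext_of_integral_walsh (hL : ∀ i, Measurable (L i))
    (hgen : ‹MeasurableSpace Ω› = ⨆ i, MeasurableSpace.comap (L i) inferInstance)
    {ν ν' : Measure Ω} [IsFiniteMeasure ν] [IsFiniteMeasure ν']
    (h : ∀ t, ∫ ω, walsh L t ω ∂ν = ∫ ω, walsh L t ω ∂ν') : ν = ν' := by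
  classical
  have hcyl : ∀ S f, ν (cylinderSet L S f) = ν' (cylinderSet L S f) := fun S f => by
    rw [← ofReal_measureReal, ← ofReal_measureReal,
      measureReal_cylinderSet_eq_sum_integral_walsh hL,
      measureReal_cylinderSet_eq_sum_integral_walsh hL]
    simp_rw [h]
  refine ext_of_generate_finite _ (le_antisymm ?_ ?_) (isPiSystem_cylinderSet L) ?_ ?_
  · rw [hgen]
    refine iSup_le fun i => Measurable.comap_le <| @measurable_to_countable' _ _ _ _ (_) _
      fun b => MeasurableSpace.measurableSet_generateFrom ⟨({i}, fun _ => b), ?_⟩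
    ext; simp [cylinderSet]
  · exact MeasurableSpace.generateFrom_le <| by
      rintro _ ⟨⟨S, f⟩, rfl⟩; exact measurableSet_cylinderSet hL S f
  · rintro _ ⟨⟨S, f⟩, rfl⟩; exact hcyl S f
  · simpa [cylinderSet] using hcyl ∅ 0

end Walsh

section Orthonormal

open ProbabilityTheory

/-- Bessel's inequality for the constant `1`: the variance of `∑ t ∈ s, f t` is `#s - #s² c²`. -/
lemma card_mul_sq_le_one_of_orthonormal {Ω ι : Type*} [DecidableEq ι] [MeasurableSpace Ω]
    {ν : Measure Ω} [IsProbabilityMeasure ν] {s : Finset ι} {f : ι → Ω → ℝ} {c : ℝ}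
    (hf : ∀ t ∈ s, MemLp (f t) 2 ν)
    (horth : ∀ t ∈ s, ∀ t' ∈ s, ∫ ω, f t ω * f t' ω ∂ν = if t = t' then 1 else 0)
    (hmean : ∀ t ∈ s, ∫ ω, f t ω ∂ν = c) : s.card * c ^ 2 ≤ 1 := by
  have hvar := variance_nonneg (∑ t ∈ s, f t) ν
  have hcov : ∀ t ∈ s, ∀ t' ∈ s, cov[f t, f t'; ν] = (if t = t' then 1 else 0) - c ^ 2 :=
    fun t ht t' ht' => by
      rw [covariance_eq_sub (hf t ht) (hf t' ht'), Pi.mul_def, horth t ht t' ht', hmean t ht,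
        hmean t' ht', sq]
  rw [variance_sum' hf, Finset.sum_congr rfl fun t ht => Finset.sum_congr rfl (hcov t ht)] at hvar
  simp only [Finset.sum_sub_distrib, Finset.sum_ite_eq, Finset.sum_const, nsmul_eq_mul] at hvar
  rcases Nat.eq_zero_or_pos s.card with h | h
  · simp [h]
  · have : (1 : ℝ) ≤ s.card := by exact_mod_cast h
    simp only [Finset.sum_boole, Finset.filter_mem_eq_inter, Finset.inter_self] at hvar
    nlinarith

lemma eq_zero_of_forall_natCast_mul_sq_le_one {c : ℝ} (h : ∀ M : ℕ, M * c ^ 2 ≤ 1) : c = 0 := by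
  by_contra hc
  obtain ⟨M, hM⟩ := exists_nat_gt (1 / c ^ 2)
  rw [div_lt_iff₀ (by positivity)] at hM
  linarith [h M]

end Orthonormal

namespace Psi

local notation "𝕏" => ℕ → ZMod 2

variable {n : ℕ}

def coord (n : ℕ) (p : Fin n × ℕ) (ω : Fin n → 𝕏) : ZMod 2 := ω p.1 p.2

lemma measurable_coord (p : Fin n × ℕ) : Measurable (coord n p) :=
  (measurable_pi_apply p.2).comp (measurable_pi_apply p.1)

lemma measurableSpace_eq_iSup_comap_coord :
    (inferInstance : MeasurableSpace (Fin n → 𝕏)) =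
      ⨆ p, MeasurableSpace.comap (coord n p) inferInstance := by
  rw [iSup_prod]
  refine iSup_congr fun j => ?_
  change MeasurableSpace.comap _ (⨆ i, MeasurableSpace.comap (fun x : 𝕏 => x i) _) = _
  rw [MeasurableSpace.comap_iSup]
  exact iSup_congr fun i => MeasurableSpace.comap_comp

/-- Characters of `(ℤ/2)^(Fin n × ℕ)`: row `j` of `a` pairs with the `j`-th copy of `X`, column `i`
with the coordinate `i ∈ ℕ` on which `T_σ` and `S_α` act. -/
noncomputable def character (S : Finset ℕ) (a : Fin n → 𝕏) (ω : Fin n → 𝕏) : ℝ :=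
  signChar (∑ i ∈ S, ∑ j, a j i * ω j i)

noncomputable def coeff (ν : Measure (Fin n → 𝕏)) (S : Finset ℕ) (a : Fin n → 𝕏) : ℝ :=
  ∫ ω, character S a ω ∂ν

lemma character_eq_walsh (S : Finset ℕ) (a : Fin n → 𝕏) :
    character S a = walsh (coord n) ((Finset.univ ×ˢ S).filter fun p => a p.1 p.2 = 1) := by
  classical
  ext ω
  simp only [character, walsh, coord, Finset.sum_filter, ← ZMod.mul_eq_ite_of_two,
    Finset.sum_product]
  rw [Finset.sum_comm]

lemma walsh_eq_character (t : Finset (Fin n × ℕ)) :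
    walsh (coord n) t =
      character (t.image Prod.snd) fun j i => if (j, i) ∈ t then 1 else 0 := by
  classical
  rw [character_eq_walsh]
  congr 1
  ext p
  simp only [Finset.mem_filter, Finset.mem_product, Finset.mem_univ, true_and, Finset.mem_image]
  constructor
  · intro hp; exact ⟨⟨p, hp, rfl⟩, by simp [hp]⟩
  · rintro ⟨-, hp⟩; by_contra h; simp [h] at hp

lemma measurable_character (S : Finset ℕ) (a : Fin n → 𝕏) : Measurable (character S a) := by
  rw [character_eq_walsh]; exact measurable_walsh measurable_coord _

lemma memLp_character (S : Finset ℕ) (a : Fin n → 𝕏) (p : ℝ≥0∞) (ν : Measure (Fin n → 𝕏))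
    [IsFiniteMeasure ν] : MemLp (character S a) p ν := by
  rw [character_eq_walsh]; exact memLp_walsh measurable_coord _ p ν

lemma ext_of_coeff {ν ν' : Measure (Fin n → 𝕏)} [IsFiniteMeasure ν] [IsFiniteMeasure ν']
    (h : ∀ S a, coeff ν S a = coeff ν' S a) : ν = ν' :=
  ext_of_integral_walsh measurable_coord measurableSpace_eq_iSup_comap_coord fun t => by
    rw [walsh_eq_character]; exact h _ _

lemma character_eq_one {S : Finset ℕ} {a : Fin n → 𝕏} (h : ∀ i ∈ S, ∀ j, a j i = 0) :
    character S a = 1 := by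
  ext ω
  rw [character, Finset.sum_eq_zero fun i hi => Finset.sum_eq_zero fun j _ => by simp [h i hi j],
    AddChar.map_zero_eq_one, Pi.one_apply]

lemma character_mul (S : Finset ℕ) (a b : Fin n → 𝕏) (ω : Fin n → 𝕏) :
    character S a ω * character S b ω = character S (a + b) ω := by
  simp only [character, ← AddChar.map_add_eq_mul, ← Finset.sum_add_distrib, Pi.add_apply, add_mul]

lemma coeff_map_perm (ρ : Measure (Fin n → 𝕏)) (σ : Equiv.Perm ℕ) (S : Finset ℕ)
    (a : Fin n → 𝕏) :
    coeff (ρ.map fun ω j i => ω j (σ i)) S a = coeff ρ (S.image σ) fun j i => a j (σ.symm i) := by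
  have hσ : Measurable fun (ω : Fin n → 𝕏) j i => ω j (σ i) := by fun_prop
  rw [coeff, integral_map hσ.aemeasurable (measurable_character S a).aestronglyMeasurable, coeff]
  congr 1
  ext ω
  simp [character, Finset.sum_image σ.injective.injOn]

lemma coeff_map_translate (ρ : Measure (Fin n → 𝕏)) (α : 𝕏) (S : Finset ℕ) (a : Fin n → 𝕏) :
    coeff (ρ.map fun ω j => ω j + α) S a =
      signChar (∑ i ∈ S, (∑ j, a j i) * α i) * coeff ρ S a := by
  have hα : Measurable fun (ω : Fin n → 𝕏) j => ω j + α := by fun_prop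
  rw [coeff, integral_map hα.aemeasurable (measurable_character S a).aestronglyMeasurable, coeff,
    ← integral_const_mul]
  congr 1
  ext ω
  simp only [character, Pi.add_apply, mul_add, Finset.sum_add_distrib, Finset.sum_mul,
    ← AddChar.map_add_eq_mul, add_comm]

lemma coeff_map_restrict {r : ℕ} (ρ : Measure (Fin n → 𝕏)) (e : Fin r → Fin n) (S : Finset ℕ)
    (b : Fin r → 𝕏) :
    coeff (ρ.map fun ω k => ω (e k)) S b =
      coeff ρ S fun j i => ∑ k, if e k = j then b k i else 0 := by
  classical
  have he : Measurable fun (ω : Fin n → 𝕏) k => ω (e k) := by fun_prop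
  rw [coeff, integral_map he.aemeasurable (measurable_character S b).aestronglyMeasurable, coeff]
  congr 1
  ext ω
  simp only [character, Finset.sum_mul, ite_mul, zero_mul]
  congr 1
  refine Finset.sum_congr rfl fun i _ => ?_
  rw [Finset.sum_comm]
  simp

lemma character_eq_of_subset {S T : Finset ℕ} {a b : Fin n → 𝕏} (hST : S ⊆ T)
    (hab : ∀ i ∈ S, ∀ j, a j i = b j i) (hb : ∀ i ∈ T, i ∉ S → ∀ j, b j i = 0) :
    character S a = character T b := by
  ext ω
  simp only [character]
  congr 1
  refine Finset.sum_subset_zero_on_sdiff hST (fun i hi => ?_) fun i hi => ?_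
  · rw [Finset.mem_sdiff] at hi
    exact Finset.sum_eq_zero fun j _ => by rw [hb i hi.1 hi.2, zero_mul]
  · exact Finset.sum_congr rfl fun j _ => by rw [hab i hi j]

lemma coeff_eq_zero_of_odd_column {ν : Measure (Fin n → 𝕏)}
    (htrans : ∀ α : 𝕏, ν.map (fun ω j => ω j + α) = ν) {S : Finset ℕ} {a : Fin n → 𝕏} {i₀ : ℕ}
    (hi₀ : i₀ ∈ S) (hodd : ∑ j, a j i₀ = 1) : coeff ν S a = 0 := by
  have h := coeff_map_translate ν (Pi.single i₀ 1) S a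
  have hsum : ∑ i ∈ S, (∑ j, a j i) * (Pi.single i₀ 1 : 𝕏) i = 1 := by
    simp [Pi.single_apply, hi₀, hodd]
  rw [htrans, hsum, signChar_one] at h
  linarith

lemma coeff_swap {ν : Measure (Fin n → 𝕏)}
    (hperm : ∀ σ : Equiv.Perm ℕ, ν.map (fun ω j i => ω j (σ i)) = ν) {S : Finset ℕ} {i k : ℕ}
    (hi : i ∈ S) (hk : k ∈ S) (a : Fin n → 𝕏) :
    coeff ν S (fun j l => a j (Equiv.swap i k l)) = coeff ν S a := by
  classical
  have hS : S.image (Equiv.swap i k) = S := by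
    refine Finset.eq_of_subset_of_card_le (Finset.image_subset_iff.mpr fun l hl => ?_)
      (Finset.card_image_of_injective _ (Equiv.injective _)).ge
    rw [Equiv.swap_apply_def]
    split_ifs <;> assumption
  conv_rhs => rw [← hperm (Equiv.swap i k), coeff_map_perm, hS]
  simp [Equiv.symm_swap]

lemma measurable_snoc_sum :
    Measurable fun u : Fin n → 𝕏 => Fin.snoc (α := fun _ => 𝕏) u (∑ k, u k) := by
  fun_prop

section Haar

variable (μ : Measure 𝕏) [IsProbabilityMeasure μ]
  (hμ : ∀ s : Finset ℕ, μ {x | ∀ i ∈ s, x i = 0} = 2⁻¹ ^ s.card)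
include hμ

lemma integral_signChar_sum_mul (S : Finset ℕ) (w : 𝕏) :
    ∫ x, signChar (∑ i ∈ S, w i * x i) ∂μ = if ∀ i ∈ S, w i = 0 then 1 else 0 := by
  classical
  have hwalsh : (fun x : 𝕏 => signChar (∑ i ∈ S, w i * x i)) =
      walsh (fun i x => x i) (S.filter (w · = 1)) := by
    ext x; simp only [walsh, Finset.sum_filter, ZMod.mul_eq_ite_of_two]
  rw [hwalsh]
  split_ifs with h
  · have : S.filter (w · = 1) = ∅ := Finset.filter_eq_empty_iff.mpr fun i hi => by simp [h i hi]
    simp [this, Pi.one_def]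
  · push Not at h
    obtain ⟨i, hi, hw⟩ := h
    exact integral_walsh_eq_zero μ measurable_pi_apply hμ
      ⟨i, Finset.mem_filter.mpr ⟨hi, (w i).eq_zero_or_eq_one_of_two.resolve_left hw⟩⟩

lemma coeff_pi (S : Finset ℕ) (a : Fin n → 𝕏) :
    coeff (Measure.pi fun _ => μ) S a = if ∀ i ∈ S, ∀ j, a j i = 0 then 1 else 0 := by
  have hprod : character S a = fun ω => ∏ j, signChar (∑ i ∈ S, a j i * ω j i) := by
    ext ω; rw [character, Finset.sum_comm, signChar_sum]
  rw [coeff, hprod]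
  refine (integral_fintype_prod_eq_prod fun j (x : 𝕏) => signChar (∑ i ∈ S, a j i * x i)).trans ?_
  simp_rw [integral_signChar_sum_mul μ hμ, Finset.prod_boole]
  simp only [Finset.mem_univ, true_implies]
  exact if_congr ⟨fun h i hi j => h j i hi, fun h j i hi => h i hi j⟩ rfl rfl

lemma coeff_eq_zero_of_row_eq_zero {ν : Measure (Fin (n + 1) → 𝕏)} {j₀ : Fin (n + 1)}
    (hface : ν.map (fun ω k => ω (j₀.succAbove k)) = Measure.pi fun _ => μ)
    {S : Finset ℕ} {a : Fin (n + 1) → 𝕏} (hrow : ∀ i ∈ S, a j₀ i = 0)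
    (hne : ∃ i ∈ S, ∃ j, a j i ≠ 0) : coeff ν S a = 0 := by
  have hchar : character S a =
      fun ω => character S (fun k => a (j₀.succAbove k)) fun k => ω (j₀.succAbove k) := by
    ext ω
    simp only [character]
    congr 1
    refine Finset.sum_congr rfl fun i hi => ?_
    rw [Fin.sum_univ_succAbove _ j₀, hrow i hi, zero_mul, zero_add]
  have hmeas : Measurable fun (ω : Fin (n + 1) → 𝕏) k => ω (j₀.succAbove k) := by fun_prop
  rw [coeff, hchar,
    ← integral_map hmeas.aemeasurable (measurable_character _ _).aestronglyMeasurable, hface,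
    ← coeff, coeff_pi μ hμ, if_neg]
  obtain ⟨i, hi, j, hj⟩ := hne
  obtain ⟨k, rfl⟩ := Fin.exists_succAbove_eq fun h : j = j₀ => hj (h ▸ hrow i hi)
  push Not
  exact ⟨i, hi, k, hj⟩

lemma coeff_eq_zero_of_column {ν : Measure (Fin (n + 1) → 𝕏)} [IsProbabilityMeasure ν]
    (hperm : ∀ σ : Equiv.Perm ℕ, ν.map (fun ω j i => ω j (σ i)) = ν) {j₀ j₁ : Fin (n + 1)}
    (hface : ν.map (fun ω k => ω (j₀.succAbove k)) = Measure.pi fun _ => μ)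
    {S : Finset ℕ} {a : Fin (n + 1) → 𝕏} {i₀ : ℕ} (hi₀ : i₀ ∈ S) (hzero : a j₀ i₀ = 0)
    (hne : a j₁ i₀ ≠ 0) : coeff ν S a = 0 := by
  classical
  refine eq_zero_of_forall_natCast_mul_sq_le_one fun M => ?_
  obtain ⟨K, hK⟩ : ∃ K, ∀ i ∈ S, i < K :=
    ⟨S.sup id + 1, fun i hi => Nat.lt_succ_of_le (Finset.le_sup (f := id) hi)⟩
  have hfresh : ∀ t, K + t ∉ S := fun t h => by have := hK _ h; omega
  set T := Finset.range (K + M)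
  have hST : S ⊆ T := fun i hi => Finset.mem_range.mpr (by have := hK i hi; omega)
  have hKT : ∀ t ∈ Finset.range M, K + t ∈ T := fun t ht => by
    simp only [T, Finset.mem_range] at ht ⊢; omega
  set a' : Fin (n + 1) → 𝕏 := fun j l => if l ∈ S then a j l else 0
  set b : ℕ → Fin (n + 1) → 𝕏 := fun t j l => a' j (Equiv.swap i₀ (K + t) l)
  have hmean : ∀ t ∈ Finset.range M, coeff ν T (b t) = coeff ν S a := fun t ht => by
    rw [coeff_swap hperm (hST hi₀) (hKT t ht) a', coeff, coeff,
      ← character_eq_of_subset (a := a) (b := a') hST (fun i hi j => (if_pos hi).symm)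
        fun i _ hi j => if_neg hi]
  have hrow : ∀ t, b t j₀ = a' j₀ := fun t =>
    Equiv.comp_swap_eq_self (f := a' j₀) (by simp [a', hi₀, hzero, hfresh t])
  have horth : ∀ t ∈ Finset.range M, ∀ t' ∈ Finset.range M,
      ∫ ω, character T (b t) ω * character T (b t') ω ∂ν = if t = t' then 1 else 0 := by
    intro t ht t' ht'
    simp_rw [character_mul]
    split_ifs with htt
    · subst htt
      rw [character_eq_one (a := b t + b t) fun i _ j => CharTwo.add_self_eq_zero _]
      simp
    · refine coeff_eq_zero_of_row_eq_zero μ hμ hface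
        (fun i _ => by simp [hrow, CharTwo.add_self_eq_zero]) ⟨K + t, hKT t ht, j₁, ?_⟩
      have hne' : K + t ≠ K + t' := by omega
      have hi₀t : K + t ≠ i₀ := fun h => hfresh t (h ▸ hi₀)
      simpa [b, a', Equiv.swap_apply_of_ne_of_ne hi₀t hne', hi₀, hfresh t] using hne
  simpa using card_mul_sq_le_one_of_orthonormal (fun t _ => memLp_character T (b t) 2 ν)
    horth hmean

theorem inSPsi_succ_of_even (hn : Even n) : InSPsi μ n (n + 1) := by
  intro ν hproj hinv hface
  have : IsProbabilityMeasure (ν.map fun x => x 0) := hproj 0 ▸ inferInstance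
  have := Measure.isProbabilityMeasure_of_map (μ := ν) fun x => x 0
  have hperm : ∀ σ : Equiv.Perm ℕ, ν.map (fun ω j i => ω j (σ i)) = ν :=
    fun σ => hinv _ (.inl ⟨σ, rfl⟩)
  have htrans : ∀ α : 𝕏, ν.map (fun ω j => ω j + α) = ν := fun α => hinv _ (.inr ⟨α, rfl⟩)
  refine ext_of_coeff fun S a => ?_
  rw [coeff_pi μ hμ]
  split_ifs with htriv
  · simp [coeff, character_eq_one htriv]
  obtain ⟨i₀, hi₀, j₁, hj₁⟩ : ∃ i ∈ S, ∃ j, a j i ≠ 0 := by simpa using htriv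
  by_cases hodd : ∃ i ∈ S, ∑ j, a j i = 1
  · obtain ⟨i, hi, hsum⟩ := hodd
    exact coeff_eq_zero_of_odd_column htrans hi hsum
  · obtain ⟨j₀, hj₀⟩ := ZMod.exists_eq_zero_of_sum_eq_zero_of_even hn
      (((∑ j, a j i₀).eq_zero_or_eq_one_of_two).resolve_right fun h => hodd ⟨i₀, hi₀, h⟩)
    exact coeff_eq_zero_of_column μ hμ hperm (hface _ (Fin.succAbove_right_injective (p := j₀)))
      hi₀ hj₀ hj₁

noncomputable def sumJoining (n : ℕ) : Measure (Fin (n + 1) → 𝕏) :=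
  (Measure.pi fun _ : Fin n => μ).map fun u => Fin.snoc (α := fun _ => 𝕏) u (∑ k, u k)

instance : IsProbabilityMeasure (sumJoining μ n) :=
  Measure.isProbabilityMeasure_map measurable_snoc_sum.aemeasurable

lemma coeff_sumJoining (S : Finset ℕ) (a : Fin (n + 1) → 𝕏) :
    coeff (sumJoining μ n) S a = if ∀ i ∈ S, ∀ j, a j i = a (Fin.last n) i then 1 else 0 := by
  have hchar : ∀ u : Fin n → 𝕏, character S a (Fin.snoc (α := fun _ => 𝕏) u (∑ k, u k)) =
      character S (fun k i => a k.castSucc i + a (Fin.last n) i) u := fun u => by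
    simp only [character, Fin.sum_univ_castSucc, Fin.snoc_castSucc, Fin.snoc_last,
      Finset.sum_apply, Finset.mul_sum, add_mul, Finset.sum_add_distrib]
  rw [sumJoining, coeff, integral_map measurable_snoc_sum.aemeasurable
    (measurable_character S a).aestronglyMeasurable]
  simp_rw [hchar]
  rw [← coeff, coeff_pi μ hμ]
  refine if_congr ?_ rfl rfl
  simp only [CharTwo.add_eq_zero, Fin.forall_fin_succ' (P := fun j => a j _ = a (Fin.last n) _),
    and_true]

lemma sumJoining_ne_pi : sumJoining μ n ≠ Measure.pi fun _ => μ := fun h => by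
  simpa [h, coeff_pi μ hμ] using coeff_sumJoining μ hμ (n := n) {0} 1

lemma map_perm_sumJoining (σ : Equiv.Perm ℕ) :
    (sumJoining μ n).map (fun ω j i => ω j (σ i)) = sumJoining μ n := by
  have : IsProbabilityMeasure ((sumJoining μ n).map fun ω j i => ω j (σ i)) :=
    Measure.isProbabilityMeasure_map (Measurable.aemeasurable (by fun_prop))
  refine ext_of_coeff fun S a => ?_
  simp [coeff_map_perm, coeff_sumJoining μ hμ]

lemma map_translate_sumJoining (hn : Odd n) (α : 𝕏) :
    (sumJoining μ n).map (fun ω j => ω j + α) = sumJoining μ n := by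
  have : IsProbabilityMeasure ((sumJoining μ n).map fun ω j => ω j + α) :=
    Measure.isProbabilityMeasure_map (Measurable.aemeasurable (by fun_prop))
  refine ext_of_coeff fun S a => ?_
  rw [coeff_map_translate, coeff_sumJoining μ hμ]
  split_ifs with h
  · have hcol : ∀ i ∈ S, ∑ j, a j i = 0 := fun i hi => by
      simp [h i hi, ZMod.natCast_eq_zero_iff_even.mpr hn.add_one]
    rw [Finset.sum_eq_zero fun i hi => by rw [hcol i hi, zero_mul], AddChar.map_zero_eq_one,
      one_mul]
  · rw [mul_zero]

lemma map_restrict_sumJoining {r : ℕ} (hr : r ≤ n) {e : Fin r → Fin (n + 1)}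
    (he : Function.Injective e) :
    (sumJoining μ n).map (fun ω k => ω (e k)) = Measure.pi fun _ => μ := by
  classical
  obtain ⟨j₀, hj₀⟩ : ∃ j₀, ∀ k, e k ≠ j₀ := by
    by_contra! h
    have := Fintype.card_le_of_surjective e fun j => h j
    simp only [Fintype.card_fin] at this
    omega
  have : IsProbabilityMeasure ((sumJoining μ n).map fun ω k => ω (e k)) :=
    Measure.isProbabilityMeasure_map (Measurable.aemeasurable (by fun_prop))
  refine ext_of_coeff fun S b => ?_
  rw [coeff_map_restrict, coeff_sumJoining μ hμ, coeff_pi μ hμ]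
  refine if_congr ⟨fun h i hi k => ?_, fun h i hi j => ?_⟩ rfl rfl
  · have hk := (h i hi (e k)).trans (h i hi j₀).symm
    simpa [he.eq_iff, hj₀] using hk
  · simp [h i hi]

lemma map_eval_sumJoining (hn : 1 ≤ n) (j : Fin (n + 1)) :
    (sumJoining μ n).map (fun ω => ω j) = μ := by
  have hface := map_restrict_sumJoining μ hμ hn (e := fun _ : Fin 1 => j)
    (Function.injective_of_subsingleton _)
  have h := congrArg (Measure.map (Function.eval 0)) hface
  rwa [Measure.map_map (measurable_pi_apply 0) (by fun_prop),
    (measurePreserving_eval _ 0).map_eq] at h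

theorem not_inSPsi_succ_of_odd (hn : Odd n) {r : ℕ} (hr : r ≤ n) : ¬ InSPsi μ r (n + 1) :=
  fun h => sumJoining_ne_pi μ hμ <| h _ (map_eval_sumJoining μ hμ hn.pos)
    (fun g hg => by
      rcases hg with ⟨σ, rfl⟩ | ⟨α, rfl⟩
      exacts [map_perm_sumJoining μ hμ σ, map_translate_sumJoining μ hμ hn α])
    fun e he => map_restrict_sumJoining μ hμ hr he

end Haar

end Psi

/-- The action `Ψ` generated by all coordinate permutations `T_σ` and all
translations `S_α` of `X = (ℤ/2)^ℕ` with Haar measure belongs to `S(2m, 2m+1)` for every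
`m ≥ 1`, but does not possess the JR-property; in fact `Ψ ∉ S(3,4)`. -/
theorem psi_odd_JR_but_not_JR
    (μ : Measure (ℕ → ZMod 2)) [IsProbabilityMeasure μ]
    (hHaar : ∀ (s : Finset ℕ) (f : ℕ → ZMod 2),
      μ {x | ∀ i ∈ s, x i = f i} = (2 : ℝ≥0∞)⁻¹ ^ s.card) :
    (∀ m : ℕ, 1 ≤ m → InSPsi μ (2 * m) (2 * m + 1)) ∧
    ¬ InSPsi μ 3 4 ∧
    ¬ (∀ n : ℕ, 2 < n → InSPsi μ 2 n) := by
  have hμ : ∀ s : Finset ℕ, μ {x | ∀ i ∈ s, x i = 0} = 2⁻¹ ^ s.card := fun s => hHaar s 0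
  have hodd : Odd 3 := by decide
  exact ⟨fun m _ => Psi.inSPsi_succ_of_even μ hμ (even_two_mul m),
    Psi.not_inSPsi_succ_of_odd μ hμ hodd le_rfl,
    fun hJR => Psi.not_inSPsi_succ_of_odd μ hμ hodd (by norm_num) (hJR 4 (by norm_num))⟩
end

section
/- Let ν ∈ M₄ and let T_j, T_{1,j}, T_{2,j}, T_{3,j} (j→∞) be sequences of automorphisms of (Y,μ) such that T_j → Id in the Halmos metric (equivalently μ(T_jA Δ A)→0 for every measurable A) and T_{1,j}, T_{2,j}, T_{3,j} →_w Θ. Then the pushforward measures ν_j = (T_j × T_{1,j} × T_{2,j} × T_{3,j})ν converge weakly to μ⁴; that is, ∫_{Y⁴} f⊗f₁⊗f₂⊗f₃ dν_j → (∫f dμ)(∫f₁ dμ)(∫f₂ dμ)(∫f₃ dμ) for all f, f₁, f₂, f₃ ∈ L²(μ). -/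
open MeasureTheory Filter Set
open scoped ENNReal symmDiff

/-!
Write the integral against `ν_j` as the inner product, in `L²(ν)`, of `(f ∘ T_j) ∘ fst` with
`h_j ∘ snd`, where `h_j = (f₁ ∘ T_{1,j}) ⊗ (f₂ ∘ T_{2,j}) ⊗ (f₃ ∘ T_{3,j})`. Since `T_j → Id`,
`f ∘ T_j → f` in norm. Weak convergence to constants passes to tensor products: on rectangles
the integrals factor, and a uniform bound (Banach–Steinhaus) extends the convergence from
rectangles to all of `L²(μ³)` by the π-λ theorem and density of simple functions. So
`h_j ⇀ ∫f₁ ∫f₂ ∫f₃`, and pairing a norm-convergent with a weakly convergent sequence through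
the two marginal maps of `ν` gives the limit `∫f ∫f₁ ∫f₂ ∫f₃`.
-/

open scoped Topology InnerProductSpace

section WeakConvergence

variable {E H : Type*} [NormedAddCommGroup E] [InnerProductSpace ℝ E] [CompleteSpace E]
  [NormedAddCommGroup H] [InnerProductSpace ℝ H] [CompleteSpace H]

theorem exists_norm_le_of_tendsto_inner {y : ℕ → E} {y₀ : E}
    (hy : ∀ z, Tendsto (fun j => ⟪z, y j⟫_ℝ) atTop (𝓝 ⟪z, y₀⟫_ℝ)) : ∃ K, ∀ j, ‖y j‖ ≤ K := by
  have hpt : ∀ z, ∃ C, ∀ j, ‖innerSL ℝ (y j) z‖ ≤ C := fun z => by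
    obtain ⟨C, hC⟩ := (hy z).norm.bddAbove_range
    exact ⟨C, fun j => by simpa [real_inner_comm] using hC ⟨j, rfl⟩⟩
  simpa only [innerSL_apply_norm] using banach_steinhaus hpt

theorem tendsto_inner_of_tendsto_of_tendsto_inner (B : E →L[ℝ] H) {x : ℕ → H} {x₀ : H}
    (hx : Tendsto x atTop (𝓝 x₀)) {y : ℕ → E} {y₀ : E}
    (hy : ∀ z, Tendsto (fun j => ⟪z, y j⟫_ℝ) atTop (𝓝 ⟪z, y₀⟫_ℝ)) :
    Tendsto (fun j => ⟪x j, B (y j)⟫_ℝ) atTop (𝓝 ⟪x₀, B y₀⟫_ℝ) := by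
  obtain ⟨K, hK⟩ := exists_norm_le_of_tendsto_inner hy
  have hsmall : Tendsto (fun j => ⟪x j - x₀, B (y j)⟫_ℝ) atTop (𝓝 0) := by
    refine squeeze_zero_norm (fun j => ?_)
      (by simpa using (tendsto_iff_norm_sub_tendsto_zero.1 hx).mul_const (‖B‖ * K))
    calc ‖⟪x j - x₀, B (y j)⟫_ℝ‖ ≤ ‖x j - x₀‖ * ‖B (y j)‖ := norm_inner_le_norm _ _
      _ ≤ ‖x j - x₀‖ * (‖B‖ * K) := by
        gcongr
        exact B.le_opNorm_of_le (hK j)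
  have hmain : Tendsto (fun j => ⟪x₀, B (y j)⟫_ℝ) atTop (𝓝 ⟪x₀, B y₀⟫_ℝ) := by
    simpa only [ContinuousLinearMap.adjoint_inner_left] using hy (B.adjoint x₀)
  simpa only [← inner_add_left, sub_add_cancel, zero_add] using hsmall.add hmain

end WeakConvergence

namespace MeasureTheory

section Density

variable {Z : Type*} [mZ : MeasurableSpace Z] {ρ : Measure Z} {p : ℝ≥0∞}

theorem Lp.indicatorConstLp_eq_smul_one {s : Set Z} (hs : MeasurableSet s) (hρs : ρ s ≠ ∞)
    (c : ℝ) : indicatorConstLp p hs hρs c = c • indicatorConstLp p hs hρs 1 := by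
  ext1
  filter_upwards [Lp.coeFn_smul c (indicatorConstLp p hs hρs (1 : ℝ)),
    indicatorConstLp_coeFn (p := p) (hs := hs) (hμs := hρs) (c := c),
    indicatorConstLp_coeFn (p := p) (hs := hs) (hμs := hρs) (c := (1 : ℝ))] with z h h' h''
  rw [h, h', Pi.smul_apply, h'']
  by_cases hz : z ∈ s <;> simp [hz]

variable [IsFiniteMeasure ρ] [Fact (1 ≤ p)]

theorem Lp.indicatorConstLp_iUnion_mem {S : Submodule ℝ (Lp ℝ p ρ)} (hp : p ≠ ∞)
    (hS : IsClosed (S : Set (Lp ℝ p ρ))) {t : ℕ → Set Z}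
    (hdisj : Pairwise (Function.onFun Disjoint t)) (ht : ∀ i, MeasurableSet (t i))
    (htS : ∀ i, indicatorConstLp p (ht i) (measure_ne_top ρ _) (1 : ℝ) ∈ S) :
    indicatorConstLp p (MeasurableSet.iUnion ht) (measure_ne_top ρ _) (1 : ℝ) ∈ S := by
  have hacc : ∀ n, MeasurableSet (accumulate t n) := fun n =>
    MeasurableSet.biUnion (to_countable _) fun i _ => ht i
  have haccS : ∀ n, indicatorConstLp p (hacc n) (measure_ne_top ρ _) (1 : ℝ) ∈ S := by
    intro n
    induction n with
    | zero => simpa [accumulate_zero_nat] using htS 0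
    | succ n ih =>
      simp_rw [accumulate_succ]
      rw [indicatorConstLp_disjoint_union (hacc n) (ht (n + 1)) (measure_ne_top ρ _)
        (measure_ne_top ρ _) (disjoint_accumulate hdisj (Nat.lt_succ_self n))]
      exact S.add_mem ih (htS _)
  have hsymm : Tendsto (fun n => ρ (accumulate t n ∆ ⋃ i, t i)) atTop (𝓝 0) := by
    have h := ENNReal.Tendsto.sub (tendsto_const_nhds (x := ρ (⋃ i, t i)))
      (tendsto_measure_iUnion_accumulate (μ := ρ) (f := t)) (Or.inl (measure_ne_top ρ _))
    rw [tsub_self] at h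
    refine h.congr fun n => ?_
    rw [symmDiff_of_le (accumulate_subset_iUnion n), measure_sdiff (accumulate_subset_iUnion n)
      (hacc n).nullMeasurableSet (measure_ne_top ρ _)]
  exact hS.mem_of_tendsto (tendsto_indicatorConstLp_set hp hsymm) (Eventually.of_forall haccS)

theorem Lp.submodule_eq_top_of_indicatorConstLp_mem (hp : p ≠ ∞) {C : Set (Set Z)}
    (hgen : mZ = MeasurableSpace.generateFrom C) (hC : IsPiSystem C) (huniv : univ ∈ C)
    {S : Submodule ℝ (Lp ℝ p ρ)} (hS : IsClosed (S : Set (Lp ℝ p ρ)))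
    (hCS : ∀ s ∈ C, ∀ hs : MeasurableSet s,
      indicatorConstLp p hs (measure_ne_top ρ s) (1 : ℝ) ∈ S) :
    S = ⊤ := by
  have hind : ∀ s (hs : MeasurableSet s),
      indicatorConstLp p hs (measure_ne_top ρ s) (1 : ℝ) ∈ S := by
    intro s hs
    induction s, hs using MeasurableSpace.induction_on_inter hgen hC with
    | empty => simp
    | basic t ht => exact hCS t ht _
    | compl t htm ht =>
      have hunion := indicatorConstLp_disjoint_union (p := p) htm htm.compl (measure_ne_top ρ _)
        (measure_ne_top ρ _) disjoint_compl_right (1 : ℝ)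
      have huS : indicatorConstLp p (htm.union htm.compl) (measure_ne_top ρ _) (1 : ℝ) ∈ S := by
        convert hCS univ huniv MeasurableSet.univ using 2; simp
      rw [hunion] at huS
      simpa using S.sub_mem huS ht
    | iUnion f hdisj hfm hf => exact Lp.indicatorConstLp_iUnion_mem hp hS hdisj hfm hf
  refine Submodule.eq_top_iff'.2 fun x => ?_
  induction x using Lp.induction hp with
  | indicatorConst c hs hμs =>
    rw [Lp.simpleFunc.coe_indicatorConst, Lp.indicatorConstLp_eq_smul_one]
    exact S.smul_mem c (hind _ hs)
  | add _ _ _ hf hg => exact S.add_mem hf hg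
  | isClosed => exact hS

theorem Lp.tendsto_of_tendsto_indicatorConstLp {F ι : Type*} [NormedAddCommGroup F]
    [NormedSpace ℝ F] {l : Filter ι} (hp : p ≠ ∞) {C : Set (Set Z)}
    (hgen : mZ = MeasurableSpace.generateFrom C) (hC : IsPiSystem C) (huniv : univ ∈ C)
    {g : ι → Lp ℝ p ρ →L[ℝ] F} {g₀ : Lp ℝ p ρ →L[ℝ] F} (hbdd : ∃ K, ∀ i, ‖g i‖ ≤ K)
    (hCg : ∀ s ∈ C, ∀ hs : MeasurableSet s,
      Tendsto (fun i => g i (indicatorConstLp p hs (measure_ne_top ρ s) 1)) l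
        (𝓝 (g₀ (indicatorConstLp p hs (measure_ne_top ρ s) 1))))
    (x : Lp ℝ p ρ) : Tendsto (fun i => g i x) l (𝓝 (g₀ x)) := by
  let S : Submodule ℝ (Lp ℝ p ρ) :=
    { carrier := {x | Tendsto (fun i => g i x) l (𝓝 (g₀ x))}
      add_mem' := fun hx hy => by simpa only [mem_ofPred_eq, map_add] using hx.add hy
      zero_mem' := by simpa only [mem_ofPred_eq, map_zero] using tendsto_const_nhds
      smul_mem' := fun c x hx => by simpa only [mem_ofPred_eq, map_smul] using hx.const_smul c }
  have hS : IsClosed (S : Set (Lp ℝ p ρ)) :=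
    Equicontinuous.isClosed_setOfPred_tendsto
      ((NormedSpace.equicontinuous_TFAE g).out 5 1 |>.mp hbdd) g₀.continuous
  have hStop := Lp.submodule_eq_top_of_indicatorConstLp_mem hp hgen hC huniv hS hCg
  show x ∈ S
  simp [hStop]

end Density

section L2

variable {Z : Type*} [MeasurableSpace Z] {ρ : Measure Z}

theorem integral_mul_eq_inner_toLp {a b : Z → ℝ} (ha : MemLp a 2 ρ) (hb : MemLp b 2 ρ) :
    ∫ z, a z * b z ∂ρ = ⟪ha.toLp a, hb.toLp b⟫_ℝ := by
  rw [L2.inner_def]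
  refine integral_congr_ae ?_
  filter_upwards [ha.coeFn_toLp, hb.coeFn_toLp] with z h h'
  simp [h, h', mul_comm]

variable {X : Type*} [MeasurableSpace X] {μ : Measure X} [SFinite ρ] {p : ℝ≥0∞}

theorem eLpNorm_fst_mul_snd (hp0 : p ≠ 0) (hp : p ≠ ∞) {u : X → ℝ} {v : Z → ℝ}
    (hu : AEStronglyMeasurable u μ) (hv : AEStronglyMeasurable v ρ) :
    eLpNorm (fun q : X × Z => u q.1 * v q.2) p (μ.prod ρ) = eLpNorm u p μ * eLpNorm v p ρ := by
  simp only [eLpNorm_eq_lintegral_rpow_enorm_toReal hp0 hp, enorm_mul,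
    ENNReal.mul_rpow_of_nonneg _ _ ENNReal.toReal_nonneg]
  rw [lintegral_prod_mul (hu.enorm.pow_const _) (hv.enorm.pow_const _),
    ENNReal.mul_rpow_of_nonneg _ _ (by positivity)]

theorem MemLp.fst_mul_snd [SFinite μ] (hp0 : p ≠ 0) (hp : p ≠ ∞) {u : X → ℝ} {v : Z → ℝ}
    (hu : MemLp u p μ) (hv : MemLp v p ρ) :
    MemLp (fun q : X × Z => u q.1 * v q.2) p (μ.prod ρ) :=
  ⟨(hu.1.comp_quasiMeasurePreserving Measure.quasiMeasurePreserving_fst).mul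
      (hv.1.comp_quasiMeasurePreserving Measure.quasiMeasurePreserving_snd),
    by rw [eLpNorm_fst_mul_snd hp0 hp hu.1 hv.1]; exact ENNReal.mul_lt_top hu.2 hv.2⟩

end L2

section WeakL2

variable {Z : Type*} [MeasurableSpace Z] {ρ : Measure Z}

structure TendstoWeaklyL2 (ρ : Measure Z) (v : ℕ → Z → ℝ) (v₀ : Z → ℝ) : Prop where
  memLp : ∀ j, MemLp (v j) 2 ρ
  memLp_limit : MemLp v₀ 2 ρ
  tendsto_integral_mul : ∀ G : Z → ℝ, MemLp G 2 ρ →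
    Tendsto (fun j => ∫ z, v j z * G z ∂ρ) atTop (𝓝 (∫ z, v₀ z * G z ∂ρ))

namespace TendstoWeaklyL2

variable {v : ℕ → Z → ℝ} {v₀ : Z → ℝ}

theorem tendsto_inner (hv : TendstoWeaklyL2 ρ v v₀) (G : Lp ℝ 2 ρ) :
    Tendsto (fun j => ⟪G, (hv.memLp j).toLp (v j)⟫_ℝ) atTop
      (𝓝 ⟪G, hv.memLp_limit.toLp v₀⟫_ℝ) := by
  have h := hv.tendsto_integral_mul G (Lp.memLp G)
  simp only [integral_mul_eq_inner_toLp (hv.memLp _) (Lp.memLp G),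
    integral_mul_eq_inner_toLp hv.memLp_limit (Lp.memLp G), Lp.toLp_coeFn] at h
  simpa only [real_inner_comm] using h

theorem exists_norm_toLp_le (hv : TendstoWeaklyL2 ρ v v₀) :
    ∃ K, ∀ j, ‖(hv.memLp j).toLp (v j)‖ ≤ K :=
  exists_norm_le_of_tendsto_inner hv.tendsto_inner

theorem tendsto_setIntegral [IsFiniteMeasure ρ] (hv : TendstoWeaklyL2 ρ v v₀) {s : Set Z}
    (hs : MeasurableSet s) :
    Tendsto (fun j => ∫ z in s, v j z ∂ρ) atTop (𝓝 (∫ z in s, v₀ z ∂ρ)) := by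
  have h := hv.tendsto_integral_mul _ ((memLp_const (1 : ℝ)).indicator hs)
  simpa only [← indicator_mul_right, mul_one, integral_indicator hs] using h

theorem of_tendsto_setIntegral [IsFiniteMeasure ρ] {C : Set (Set Z)}
    (hgen : ‹MeasurableSpace Z› = MeasurableSpace.generateFrom C) (hC : IsPiSystem C)
    (huniv : univ ∈ C) (hv : ∀ j, MemLp (v j) 2 ρ) (hv₀ : MemLp v₀ 2 ρ)
    (hbdd : ∃ K, ∀ j, ‖(hv j).toLp (v j)‖ ≤ K)
    (hCv : ∀ s ∈ C, Tendsto (fun j => ∫ z in s, v j z ∂ρ) atTop (𝓝 (∫ z in s, v₀ z ∂ρ))) :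
    TendstoWeaklyL2 ρ v v₀ := by
  refine ⟨hv, hv₀, fun G hG => ?_⟩
  have h := Lp.tendsto_of_tendsto_indicatorConstLp ENNReal.ofNat_ne_top hgen hC huniv
    (l := atTop) (g := fun j => innerSL ℝ ((hv j).toLp (v j))) (g₀ := innerSL ℝ (hv₀.toLp v₀))
    (by simpa only [innerSL_apply_norm] using hbdd) ?_ (hG.toLp G)
  · simpa only [innerSL_apply_apply, integral_mul_eq_inner_toLp (hv _) hG,
      integral_mul_eq_inner_toLp hv₀ hG] using h
  · intro s hsC hs
    simp only [innerSL_apply_apply, real_inner_comm (indicatorConstLp _ _ _ _),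
      L2.inner_indicatorConstLp_one]
    have hcoe : ∀ {w : Z → ℝ} (hw : MemLp w 2 ρ), ∫ z in s, hw.toLp w z ∂ρ = ∫ z in s, w z ∂ρ :=
      fun hw => integral_congr_ae (ae_restrict_of_ae hw.coeFn_toLp)
    simpa only [hcoe] using hCv s hsC

theorem prod {X : Type*} [MeasurableSpace X] {μ : Measure X} [IsFiniteMeasure μ]
    [IsFiniteMeasure ρ] {w : ℕ → X → ℝ} {w₀ : X → ℝ} (hw : TendstoWeaklyL2 μ w w₀)
    (hv : TendstoWeaklyL2 ρ v v₀) :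
    TendstoWeaklyL2 (μ.prod ρ) (fun j q => w j q.1 * v j q.2) (fun q => w₀ q.1 * v₀ q.2) := by
  obtain ⟨Kw, hKw⟩ := hw.exists_norm_toLp_le
  obtain ⟨Kv, hKv⟩ := hv.exists_norm_toLp_le
  refine of_tendsto_setIntegral generateFrom_prod.symm isPiSystem_prod
    ⟨univ, .univ, univ, .univ, univ_prod_univ⟩
    (fun j => (hw.memLp j).fst_mul_snd two_ne_zero ENNReal.ofNat_ne_top (hv.memLp j))
    (hw.memLp_limit.fst_mul_snd two_ne_zero ENNReal.ofNat_ne_top hv.memLp_limit)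
    ⟨Kw * Kv, fun j => ?_⟩ ?_
  · rw [Lp.norm_toLp, eLpNorm_fst_mul_snd two_ne_zero ENNReal.ofNat_ne_top (hw.memLp j).1
      (hv.memLp j).1, ENNReal.toReal_mul, ← Lp.norm_toLp _ (hw.memLp j),
      ← Lp.norm_toLp _ (hv.memLp j)]
    exact mul_le_mul (hKw j) (hKv j) (norm_nonneg _) ((norm_nonneg _).trans (hKw 0))
  · rintro _ ⟨s, hs, t, ht, rfl⟩
    simp only [setIntegral_prod_mul]
    exact (hw.tendsto_setIntegral hs).mul (hv.tendsto_setIntegral ht)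

end TendstoWeaklyL2

end WeakL2

section Dynamics

variable {α : Type*} [MeasurableSpace α] {μ : Measure α}

theorem MeasurePreserving.measure_preimage_symmDiff_eq {T : α ≃ᵐ α}
    (hT : MeasurePreserving T μ μ) (A : Set α) : μ ((T ⁻¹' A) ∆ A) = μ ((T '' A) ∆ A) :=
  calc μ ((T ⁻¹' A) ∆ A) = μ (T ⁻¹' (A ∆ (T '' A))) := by
        rw [preimage_symmDiff, T.preimage_image]
    _ = μ (A ∆ (T '' A)) := hT.measure_preimage_equiv _
    _ = μ ((T '' A) ∆ A) := by rw [symmDiff_comm]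

theorem Lp.tendsto_compMeasurePreserving_of_tendsto_measure_symmDiff [IsFiniteMeasure μ]
    {p : ℝ≥0∞} [Fact (1 ≤ p)] (hp : p ≠ ∞) {T : ℕ → α → α}
    (hT : ∀ j, MeasurePreserving (T j) μ μ)
    (hTA : ∀ A, MeasurableSet A → Tendsto (fun j => μ ((T j ⁻¹' A) ∆ A)) atTop (𝓝 0))
    (x : Lp ℝ p μ) : Tendsto (fun j => Lp.compMeasurePreserving (T j) (hT j) x) atTop (𝓝 x) :=
  Lp.tendsto_of_tendsto_indicatorConstLp hp MeasurableSpace.generateFrom_measurableSet.symm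
    MeasurableSpace.isPiSystem_measurableSet MeasurableSet.univ
    (g := fun j => (Lp.compMeasurePreservingₗᵢ ℝ (T j) (hT j)).toContinuousLinearMap)
    (g₀ := ContinuousLinearMap.id ℝ _)
    ⟨1, fun _ => LinearIsometry.norm_toContinuousLinearMap_le _⟩
    (fun s _ hs => tendsto_indicatorConstLp_set (hs := hs) (hμs := measure_ne_top μ s)
      (ht := fun j => hs.preimage (hT j).measurable) (hμt := fun _ => measure_ne_top μ _) hp
      (hTA s hs)) x

theorem tendstoWeaklyL2_comp [IsFiniteMeasure μ] {T : ℕ → α → α}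
    (hT : ∀ j, MeasurePreserving (T j) μ μ)
    (hTΘ : ∀ f g : α → ℝ, MemLp f 2 μ → MemLp g 2 μ →
      Tendsto (fun j => ∫ y, f (T j y) * g y ∂μ) atTop (𝓝 ((∫ y, f y ∂μ) * ∫ y, g y ∂μ)))
    {f : α → ℝ} (hf : MemLp f 2 μ) :
    TendstoWeaklyL2 μ (fun j y => f (T j y)) (fun _ => ∫ y, f y ∂μ) :=
  ⟨fun j => hf.comp_measurePreserving (hT j), memLp_const _,
    fun G hG => by simpa only [integral_const_mul] using hTΘ f G hf hG⟩

end Dynamics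

theorem tendsto_integral_fst_mul_snd {α β : Type*} [MeasurableSpace α] [MeasurableSpace β]
    {μ : Measure α} {ρ : Measure β} {ν : Measure (α × β)} (hν₁ : ν.map Prod.fst = μ)
    (hν₂ : ν.map Prod.snd = ρ) {u : ℕ → α → ℝ} {u₀ : α → ℝ} (hu : ∀ j, MemLp (u j) 2 μ)
    (hu₀ : MemLp u₀ 2 μ) (hlim : Tendsto (fun j => (hu j).toLp (u j)) atTop (𝓝 (hu₀.toLp u₀)))
    {v : ℕ → β → ℝ} {v₀ : β → ℝ} (hv : TendstoWeaklyL2 ρ v v₀) :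
    Tendsto (fun j => ∫ q, u j q.1 * v j q.2 ∂ν) atTop (𝓝 (∫ q, u₀ q.1 * v₀ q.2 ∂ν)) := by
  have h₁ : MeasurePreserving Prod.fst ν μ := ⟨measurable_fst, hν₁⟩
  have h₂ : MeasurePreserving Prod.snd ν ρ := ⟨measurable_snd, hν₂⟩
  let P₁ := (Lp.compMeasurePreservingₗᵢ ℝ Prod.fst h₁ :
    Lp ℝ 2 μ →ₗᵢ[ℝ] Lp ℝ 2 ν).toContinuousLinearMap
  let P₂ := (Lp.compMeasurePreservingₗᵢ ℝ Prod.snd h₂ :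
    Lp ℝ 2 ρ →ₗᵢ[ℝ] Lp ℝ 2 ν).toContinuousLinearMap
  have hinner : ∀ {a : α → ℝ} {b : β → ℝ} (ha : MemLp a 2 μ) (hb : MemLp b 2 ρ),
      ∫ q, a q.1 * b q.2 ∂ν = ⟪P₁ (ha.toLp a), P₂ (hb.toLp b)⟫_ℝ := fun ha hb =>
    integral_mul_eq_inner_toLp (ha.comp_measurePreserving h₁) (hb.comp_measurePreserving h₂)
  simp only [hinner (hu _) (hv.memLp _), hinner hu₀ hv.memLp_limit]
  exact tendsto_inner_of_tendsto_of_tendsto_inner P₂ ((P₁.continuous.tendsto _).comp hlim)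
    hv.tendsto_inner

end MeasureTheory

open MeasureTheory

theorem joining_limit_product_general
    {Y : Type*} [MeasurableSpace Y]
    (μ : Measure Y) [IsProbabilityMeasure μ]
    (ν : Measure (Y × Y × Y × Y))
    (hν1 : Measure.map Prod.fst ν = μ)
    (hν2 : Measure.map Prod.snd ν = μ.prod (μ.prod μ))
    (T T1 T2 T3 : ℕ → Y ≃ᵐ Y)
    (hT : ∀ j, MeasurePreserving (T j) μ μ) (hT1 : ∀ j, MeasurePreserving (T1 j) μ μ)
    (hT2 : ∀ j, MeasurePreserving (T2 j) μ μ) (hT3 : ∀ j, MeasurePreserving (T3 j) μ μ)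
    (hTid : ∀ A : Set Y, MeasurableSet A →
      Tendsto (fun j => μ ((T j '' A) ∆ A)) atTop (nhds 0))
    (hw1 : ∀ f g : Y → ℝ, MemLp f 2 μ → MemLp g 2 μ →
      Tendsto (fun j => ∫ y, f (T1 j y) * g y ∂μ) atTop
        (nhds ((∫ y, f y ∂μ) * ∫ y, g y ∂μ)))
    (hw2 : ∀ f g : Y → ℝ, MemLp f 2 μ → MemLp g 2 μ →
      Tendsto (fun j => ∫ y, f (T2 j y) * g y ∂μ) atTop
        (nhds ((∫ y, f y ∂μ) * ∫ y, g y ∂μ)))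
    (hw3 : ∀ f g : Y → ℝ, MemLp f 2 μ → MemLp g 2 μ →
      Tendsto (fun j => ∫ y, f (T3 j y) * g y ∂μ) atTop
        (nhds ((∫ y, f y ∂μ) * ∫ y, g y ∂μ))) :
    ∀ f f1 f2 f3 : Y → ℝ, MemLp f 2 μ → MemLp f1 2 μ → MemLp f2 2 μ → MemLp f3 2 μ →
      Tendsto (fun j => ∫ q, f q.1 * f1 q.2.1 * f2 q.2.2.1 * f3 q.2.2.2
          ∂(Measure.map (fun q : Y × Y × Y × Y =>
              (T j q.1, T1 j q.2.1, T2 j q.2.2.1, T3 j q.2.2.2)) ν))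
        atTop
        (nhds ((∫ y, f y ∂μ) * (∫ y, f1 y ∂μ) * (∫ y, f2 y ∂μ) * ∫ y, f3 y ∂μ)) := by
  intro f f₁ f₂ f₃ hf hf₁ hf₂ hf₃
  have hweak := (tendstoWeaklyL2_comp hT1 hw1 hf₁).prod
    ((tendstoWeaklyL2_comp hT2 hw2 hf₂).prod (tendstoWeaklyL2_comp hT3 hw3 hf₃))
  have hstrong := Lp.tendsto_compMeasurePreserving_of_tendsto_measure_symmDiff
    ENNReal.ofNat_ne_top hT (fun A hA => by
      simpa only [(hT _).measure_preimage_symmDiff_eq] using hTid A hA) (hf.toLp f)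
  have hlim := tendsto_integral_fst_mul_snd hν1 hν2 (fun j => hf.comp_measurePreserving (hT j))
    hf hstrong hweak
  have hν : ∫ q : Y × Y × Y × Y, f q.1 ∂ν = ∫ y, f y ∂μ := by
    rw [← integral_map measurable_fst.aemeasurable (hν1 ▸ hf.1), hν1]
  rw [integral_mul_const, hν] at hlim
  have hmap : ∀ j, Measure.map (fun q : Y × Y × Y × Y =>
      (T j q.1, T1 j q.2.1, T2 j q.2.2.1, T3 j q.2.2.2)) ν =
      ν.map ((T j).prodCongr ((T1 j).prodCongr ((T2 j).prodCongr (T3 j)))) := fun _ => rfl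
  simp only [hmap, integral_map_equiv]
  convert hlim using 2 with j
  · simp only [mul_assoc]
    rfl
  · ring

/-- **Lemma 3.3.** Let `ν ∈ M₄` and let `T_j → Id` in the Halmos metric
(equivalently `μ(T_jA Δ A) → 0` for every measurable `A`) while `T_{1,j}, T_{2,j}, T_{3,j}`
converge weakly (as Koopman operators) to `Θ`. Then
`(T_j × T_{1,j} × T_{2,j} × T_{3,j})ν → μ⁴` weakly. -/
theorem joining_limit_product
    {Y : Type*} [MeasurableSpace Y] [StandardBorelSpace Y]
    (μ : Measure Y) [IsProbabilityMeasure μ]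
    (ν : Measure (Y × Y × Y × Y))
    (hν1 : Measure.map Prod.fst ν = μ)
    (hν2 : Measure.map Prod.snd ν = μ.prod (μ.prod μ))
    (T T1 T2 T3 : ℕ → Y ≃ᵐ Y)
    (hT : ∀ j, MeasurePreserving (T j) μ μ) (hT1 : ∀ j, MeasurePreserving (T1 j) μ μ)
    (hT2 : ∀ j, MeasurePreserving (T2 j) μ μ) (hT3 : ∀ j, MeasurePreserving (T3 j) μ μ)
    (hTid : ∀ A : Set Y, MeasurableSet A →
      Tendsto (fun j => μ ((T j '' A) ∆ A)) atTop (nhds 0))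
    (hw1 : ∀ f g : Y → ℝ, MemLp f 2 μ → MemLp g 2 μ →
      Tendsto (fun j => ∫ y, f (T1 j y) * g y ∂μ) atTop
        (nhds ((∫ y, f y ∂μ) * ∫ y, g y ∂μ)))
    (hw2 : ∀ f g : Y → ℝ, MemLp f 2 μ → MemLp g 2 μ →
      Tendsto (fun j => ∫ y, f (T2 j y) * g y ∂μ) atTop
        (nhds ((∫ y, f y ∂μ) * ∫ y, g y ∂μ)))
    (hw3 : ∀ f g : Y → ℝ, MemLp f 2 μ → MemLp g 2 μ →
      Tendsto (fun j => ∫ y, f (T3 j y) * g y ∂μ) atTop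
        (nhds ((∫ y, f y ∂μ) * ∫ y, g y ∂μ))) :
    ∀ f f1 f2 f3 : Y → ℝ, MemLp f 2 μ → MemLp f1 2 μ → MemLp f2 2 μ → MemLp f3 2 μ →
      Tendsto (fun j => ∫ q, f q.1 * f1 q.2.1 * f2 q.2.2.1 * f3 q.2.2.2
          ∂(Measure.map (fun q : Y × Y × Y × Y =>
              (T j q.1, T1 j q.2.1, T2 j q.2.2.1, T3 j q.2.2.2)) ν))
        atTop
        (nhds ((∫ y, f y ∂μ) * (∫ y, f1 y ∂μ) * (∫ y, f2 y ∂μ) * ∫ y, f3 y ∂μ)) :=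
  joining_limit_product_general μ ν hν1 hν2 T T1 T2 T3 hT hT1 hT2 hT3 hTid hw1 hw2 hw3
end

section
/- Let R=(S,R_x) be a relatively weakly mixing extension, i.e., the skew product R×_X R = (S, R_x×R_x) acting on X×Y×Y is ergodic with respect to μ⊗μ⊗μ. Then for all measurable sets A,B ⊂ Y, ∫_X (1/N) Σ_{p=1}^{N} ( μ(C(x,p)A ∩ B) − μ(A)μ(B) )² dμ(x) → 0 as N→∞. -/
/-!
Write `g_p(x) = ν(C(x,p)A ∩ B) = ν(A ∩ C(x,p)⁻¹B)` and let `T = R ×_X R`, `m = μ ⊗ ν ⊗ ν`.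
By Fubini, `∫ g_p dμ = m(U ∩ T⁻ᵖV)` for `U = X × A × Y`, `V = X × B × Y`, and
`∫ g_p² dμ = m(U' ∩ T⁻ᵖV')` for `U' = X × A × A`, `V' = X × B × B`. As `T` is ergodic, von Neumann's
mean ergodic theorem (the invariant vectors of the Koopman operator being the constants) makes the
Cesàro means of these correlations converge to `m(U)m(V) = ν(A)ν(B)` and to `m(U')m(V') = (ν(A)ν(B))²`.
Expanding the square, the Cesàro means of `∫ (g_p - ν(A)ν(B))² dμ` converge to `a² - 2a·a + a² = 0`
with `a = ν(A)ν(B)`.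
-/

open MeasureTheory Filter Set
open scoped ENNReal symmDiff

open Function
open scoped RealInnerProductSpace Topology

section MeanErgodic

variable {Ω : Type*} [MeasurableSpace Ω] {m : Measure Ω} {T : Ω → Ω}

noncomputable def koopmanL2 (hT : MeasurePreserving T m m) : Lp ℝ 2 m →L[ℝ] Lp ℝ 2 m :=
  (Lp.compMeasurePreservingₗᵢ ℝ T hT).toContinuousLinearMap

lemma koopmanL2_iterate_indicatorConstLp (hT : MeasurePreserving T m m) {V : Set Ω}
    (hV : MeasurableSet V) (hmV : m V ≠ ∞) (n : ℕ) :
    (koopmanL2 hT)^[n] (indicatorConstLp 2 hV hmV (1 : ℝ)) =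
      indicatorConstLp 2 (hV.preimage (hT.iterate n).measurable)
        (by rwa [(hT.iterate n).measure_preimage hV.nullMeasurableSet]) 1 := by
  change (Lp.compMeasurePreserving T hT)^[n] _ = _
  rw [Lp.compMeasurePreserving_iterate]
  rfl

variable [IsProbabilityMeasure m]

lemma koopmanL2_const (hT : MeasurePreserving T m m) (c : ℝ) :
    koopmanL2 hT (Lp.const 2 m c) = Lp.const 2 m c :=
  Subtype.ext (AEEqFun.compMeasurePreserving_mk _ hT)

lemma Ergodic.exists_eq_const_of_koopmanL2_eq (hT : Ergodic T m) {g : Lp ℝ 2 m}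
    (hg : koopmanL2 hT.toMeasurePreserving g = g) : ∃ c, g = Lp.const 2 m c := by
  obtain ⟨c, hc⟩ := hT.eq_const_of_compMeasurePreserving_eq (congrArg Subtype.val hg)
  exact ⟨c, Subtype.ext hc⟩

lemma MeasureTheory.L2.inner_const_one_left (f : Lp ℝ 2 m) :
    ⟪Lp.const 2 m (1 : ℝ), f⟫ = ∫ x, f x ∂m := by
  rw [← indicatorConstLp_univ, L2.inner_indicatorConstLp_one, setIntegral_univ]

lemma MeasureTheory.Lp.integral_const (p : ℝ≥0∞) (c : ℝ) : ∫ x, Lp.const p m c x ∂m = c := by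
  rw [integral_congr_ae (Lp.coeFn_const p m c)]
  simp

lemma Ergodic.orthogonalProjection_eqLocus_koopmanL2 (hT : Ergodic T m) (f : Lp ℝ 2 m) :
    (((koopmanL2 hT.toMeasurePreserving).eqLocus
        (1 : Lp ℝ 2 m →L[ℝ] Lp ℝ 2 m)).orthogonalProjectionOnto f : Lp ℝ 2 m) =
      Lp.const 2 m (∫ x, f x ∂m) := by
  set E := (koopmanL2 hT.toMeasurePreserving).eqLocus (1 : Lp ℝ 2 m →L[ℝ] Lp ℝ 2 m)
  obtain ⟨c, hc⟩ := hT.exists_eq_const_of_koopmanL2_eq (E.orthogonalProjectionOnto f).2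
  have hone : Lp.const 2 m (1 : ℝ) ∈ E := koopmanL2_const _ 1
  rw [hc]
  congr 1
  calc c = ⟪Lp.const 2 m (1 : ℝ), Lp.const 2 m c⟫ := by
        rw [L2.inner_const_one_left, Lp.integral_const]
    _ = ⟪Lp.const 2 m (1 : ℝ), E.orthogonalProjectionOnto f⟫ := by rw [hc]
    _ = ∫ x, f x ∂m := by
      rw [← L2.inner_const_one_left]
      exact Submodule.inner_orthogonalProjectionOnto_eq_of_mem_left ⟨_, hone⟩ f

theorem Ergodic.tendsto_birkhoffAverage_koopmanL2 (hT : Ergodic T m) (f : Lp ℝ 2 m) :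
    Tendsto (birkhoffAverage ℝ (koopmanL2 hT.toMeasurePreserving) _root_.id · f) atTop
      (𝓝 (Lp.const 2 m (∫ x, f x ∂m))) := by
  rw [← hT.orthogonalProjection_eqLocus_koopmanL2]
  exact (koopmanL2 _).tendsto_birkhoffAverage_orthogonalProjection
    (LinearIsometry.norm_toContinuousLinearMap_le _) f

theorem Ergodic.tendsto_cesaro_measureReal_inter_preimage (hT : Ergodic T m) {U V : Set Ω}
    (hU : MeasurableSet U) (hV : MeasurableSet V) :
    Tendsto (fun N : ℕ => (N : ℝ)⁻¹ * ∑ p ∈ Finset.range N, m.real (U ∩ T^[p] ⁻¹' V)) atTop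
      (𝓝 (m.real U * m.real V)) := by
  have hlim := (tendsto_const_nhds (x := indicatorConstLp 2 hU (measure_ne_top m U) (1 : ℝ))).inner
    (𝕜 := ℝ) (hT.tendsto_birkhoffAverage_koopmanL2 (indicatorConstLp 2 hV (measure_ne_top m V) 1))
  rw [L2.inner_indicatorConstLp_one, integral_indicatorConstLp] at hlim
  convert hlim using 1
  · ext N
    rw [birkhoffAverage, birkhoffSum, inner_smul_right, inner_sum]
    simp [koopmanL2_iterate_indicatorConstLp,
      L2.real_inner_indicatorConstLp_one_indicatorConstLp_one]
  · simp

theorem Ergodic.tendsto_cesaro_Icc_measureReal_inter_preimage (hT : Ergodic T m) {U V : Set Ω}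
    (hU : MeasurableSet U) (hV : MeasurableSet V) :
    Tendsto (fun N : ℕ => (N : ℝ)⁻¹ * ∑ p ∈ Finset.Icc 1 N, m.real (U ∩ T^[p] ⁻¹' V)) atTop
      (𝓝 (m.real U * m.real V)) := by
  have h := hT.tendsto_cesaro_measureReal_inter_preimage hU (hV.preimage hT.measurable)
  rw [hT.toMeasurePreserving.measureReal_preimage hV.nullMeasurableSet] at h
  refine h.congr fun N => ?_
  rw [← Finset.Ico_add_one_right_eq_Icc, Finset.sum_Ico_eq_sum_range, add_tsub_cancel_right]
  refine congrArg _ (Finset.sum_congr rfl fun p _ => ?_)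
  rw [add_comm, iterate_succ', preimage_comp]

end MeanErgodic

section Cocycle

variable {X Y : Type*} [MeasurableSpace Y]

def cocycleEquiv (S : X → X) (c : X → Y ≃ᵐ Y) (x : X) : ℕ → Y ≃ᵐ Y
  | 0 => .refl Y
  | p + 1 => (cocycleEquiv S c x p).trans (c (S^[p] x))

lemma coe_cocycleEquiv (S : X → X) (c : X → Y ≃ᵐ Y) (x : X) (p : ℕ) :
    ⇑(cocycleEquiv S c x p) = cocycleF S (fun x => ⇑(c x)) x p := by
  induction p with
  | zero => rfl
  | succ p ih => simp [cocycleEquiv, cocycleF, ih, MeasurableEquiv.coe_trans]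

lemma measurePreserving_cocycleEquiv {ν : Measure Y} (S : X → X) {c : X → Y ≃ᵐ Y}
    (hc : ∀ x, MeasurePreserving (c x) ν ν) (x : X) (p : ℕ) :
    MeasurePreserving (cocycleEquiv S c x p) ν ν := by
  induction p with
  | zero => exact .id ν
  | succ p ih => exact (hc (S^[p] x)).comp ih

lemma MeasureTheory.MeasurePreserving.measure_image_inter {ν : Measure Y} {e : Y ≃ᵐ Y}
    (he : MeasurePreserving e ν ν) (A B : Set Y) : ν (e '' A ∩ B) = ν (A ∩ e ⁻¹' B) := by
  rw [← image_inter_preimage, e.image_eq_preimage_symm, he.symm.measure_preimage_equiv]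

end Cocycle

section FiberSquare

variable {X Y : Type*}

/-- The relative product `R ×_X R` of the skew product `R = (S, R_x)` with itself. -/
def fiberSquare (S : X → X) (c : X → Y → Y) : X × Y × Y → X × Y × Y :=
  fun q => (S q.1, c q.1 q.2.1, c q.1 q.2.2)

lemma iterate_fiberSquare (S : X → X) (c : X → Y → Y) (p : ℕ) (q : X × Y × Y) :
    (fiberSquare S c)^[p] q =
      (S^[p] q.1, cocycleF S c q.1 p q.2.1, cocycleF S c q.1 p q.2.2) := by
  induction p with
  | zero => rfl
  | succ p ih => simp [iterate_succ_apply', ih, cocycleF, fiberSquare]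

variable [MeasurableSpace X] [MeasurableSpace Y] {μ : Measure X} {ν : Measure Y}
  {S : X → X} {c : X → Y → Y}

lemma measurable_cocycleF_of_measurable_fiberSquare (h : Measurable (fiberSquare S c)) (p : ℕ) :
    Measurable fun q : X × Y => cocycleF S c q.1 p q.2 := by
  have := (h.iterate p).comp (measurable_fst.prodMk (measurable_snd.prodMk measurable_snd))
  simpa [Function.comp_def, iterate_fiberSquare] using
    measurable_fst.comp (measurable_snd.comp this)

lemma measurable_measure_inter_preimage_cocycleF [SFinite ν] (h : Measurable (fiberSquare S c))
    {A B : Set Y} (hA : MeasurableSet A) (hB : MeasurableSet B) (p : ℕ) :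
    Measurable fun x => ν (A ∩ cocycleF S c x p ⁻¹' B) :=
  measurable_measure_prodMk_left
    ((measurable_snd hA).inter (measurable_cocycleF_of_measurable_fiberSquare h p hB))

lemma measureReal_inter_preimage_iterate_fiberSquare [IsFiniteMeasure μ] [IsFiniteMeasure ν]
    (h : Measurable (fiberSquare S c)) {A A' B B' : Set Y} (hA : MeasurableSet A)
    (hA' : MeasurableSet A') (hB : MeasurableSet B) (hB' : MeasurableSet B') (p : ℕ) :
    (μ.prod (ν.prod ν)).real
        ((univ ×ˢ A ×ˢ A') ∩ (fiberSquare S c)^[p] ⁻¹' (univ ×ˢ B ×ˢ B')) =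
      ∫ x, ν.real (A ∩ cocycleF S c x p ⁻¹' B) * ν.real (A' ∩ cocycleF S c x p ⁻¹' B') ∂μ := by
  have hfiber : ∀ x,
      Prod.mk x ⁻¹' ((univ ×ˢ A ×ˢ A') ∩ (fiberSquare S c)^[p] ⁻¹' (univ ×ˢ B ×ˢ B')) =
        (A ∩ cocycleF S c x p ⁻¹' B) ×ˢ (A' ∩ cocycleF S c x p ⁻¹' B') := by
    intro x
    ext ⟨y, z⟩
    simp only [mem_preimage, mem_inter_iff, mem_prod, mem_univ, true_and, iterate_fiberSquare]
    tauto
  rw [measureReal_def, Measure.prod_apply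
    ((MeasurableSet.univ.prod (hA.prod hA')).inter
      ((h.iterate p) (MeasurableSet.univ.prod (hB.prod hB'))))]
  simp_rw [hfiber, Measure.prod_prod]
  rw [← integral_toReal (f := fun x => ν _ * ν _)
    ((measurable_measure_inter_preimage_cocycleF h hA hB p).mul
      (measurable_measure_inter_preimage_cocycleF h hA' hB' p)).aemeasurable
    (ae_of_all _ fun x => ENNReal.mul_lt_top (measure_lt_top _ _) (measure_lt_top _ _))]
  simp [measureReal_def]

theorem Ergodic.tendsto_cesaro_integral_measureReal_cocycleF_mul [IsProbabilityMeasure μ]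
    [IsProbabilityMeasure ν] (herg : Ergodic (fiberSquare S c) (μ.prod (ν.prod ν)))
    {A A' B B' : Set Y} (hA : MeasurableSet A) (hA' : MeasurableSet A') (hB : MeasurableSet B)
    (hB' : MeasurableSet B') :
    Tendsto (fun N : ℕ => (N : ℝ)⁻¹ * ∑ p ∈ Finset.Icc 1 N,
        ∫ x, ν.real (A ∩ cocycleF S c x p ⁻¹' B) * ν.real (A' ∩ cocycleF S c x p ⁻¹' B') ∂μ)
      atTop (𝓝 (ν.real A * ν.real A' * (ν.real B * ν.real B'))) := by
  have h := herg.tendsto_cesaro_Icc_measureReal_inter_preimage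
    (MeasurableSet.univ.prod (hA.prod hA')) (MeasurableSet.univ.prod (hB.prod hB'))
  simp_rw [measureReal_inter_preimage_iterate_fiberSquare herg.measurable hA hA' hB hB'] at h
  simpa [measureReal_prod_prod] using h

end FiberSquare

theorem tendsto_integral_cesaro_sq_sub {X : Type*} [MeasurableSpace X] {μ : Measure X}
    [IsProbabilityMeasure μ] {g : ℕ → X → ℝ} {r : ℝ} (hg : ∀ p, MemLp (g p) 2 μ)
    (h2 : Tendsto (fun N : ℕ => (N : ℝ)⁻¹ * ∑ p ∈ Finset.Icc 1 N, ∫ x, g p x * g p x ∂μ)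
      atTop (𝓝 (r * r)))
    (h1 : Tendsto (fun N : ℕ => (N : ℝ)⁻¹ * ∑ p ∈ Finset.Icc 1 N, ∫ x, g p x ∂μ) atTop (𝓝 r)) :
    Tendsto (fun N : ℕ => ∫ x, (N : ℝ)⁻¹ * ∑ p ∈ Finset.Icc 1 N, (g p x - r) ^ 2 ∂μ)
      atTop (𝓝 0) := by
  have hint : ∀ p, Integrable (g p) μ := fun p => (hg p).integrable one_le_two
  have hint2 : ∀ p, Integrable (fun x => g p x * g p x) μ := fun p => by
    simpa [sq] using (hg p).integrable_sq
  have hexpand : ∀ p, ∫ x, (g p x - r) ^ 2 ∂μ =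
      ∫ x, g p x * g p x ∂μ - 2 * r * ∫ x, g p x ∂μ + r * r := by
    intro p
    have : (fun x => (g p x - r) ^ 2) = fun x => g p x * g p x - 2 * r * g p x + r * r := by
      funext x; ring
    rw [this, integral_add (f := fun x => g p x * g p x - 2 * r * g p x)
      ((hint2 p).sub ((hint p).const_mul _)) (integrable_const _),
      integral_sub (hint2 p) ((hint p).const_mul _), integral_const_mul]
    simp
  have hlim := (h2.sub (h1.const_mul (2 * r))).add_const (r * r)
  rw [show r * r - 2 * r * r + r * r = 0 by ring] at hlim
  refine hlim.congr' ?_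
  filter_upwards [eventually_ge_atTop 1] with N hN
  have hsq : ∀ p, Integrable (fun x => (g p x - r) ^ 2) μ := fun p =>
    ((hg p).sub (memLp_const r)).integrable_sq
  rw [integral_const_mul, integral_finsetSum _ fun p _ => hsq p]
  simp_rw [hexpand, Finset.sum_add_distrib, Finset.sum_sub_distrib, ← Finset.mul_sum,
    Finset.sum_const, Nat.card_Icc, add_tsub_cancel_right, nsmul_eq_mul]
  field_simp

theorem relative_weak_mixing_cesaro_general
    {X Y : Type*} [MeasurableSpace X] [MeasurableSpace Y]
    (μ : Measure X) (ν : Measure Y) [IsProbabilityMeasure μ] [IsProbabilityMeasure ν]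
    (S : X → X) (c : X → Y ≃ᵐ Y)
    (hcp : ∀ x, MeasurePreserving (c x) ν ν)
    (herg : Ergodic (fun q : X × Y × Y => (S q.1, c q.1 q.2.1, c q.1 q.2.2))
      (μ.prod (ν.prod ν))) :
    ∀ A B : Set Y, MeasurableSet A → MeasurableSet B →
      Tendsto (fun N : ℕ => ∫ x, (N : ℝ)⁻¹ * ∑ p ∈ Finset.Icc 1 N,
          ((ν (cocycleF S (fun x => ⇑(c x)) x p '' A ∩ B)).toReal -
            (ν A).toReal * (ν B).toReal) ^ 2 ∂μ)
        atTop (nhds 0) := by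
  intro A B hA hB
  change Ergodic (fiberSquare S fun x => ⇑(c x)) _ at herg
  have hg : ∀ p, MemLp (fun x => ν.real (A ∩ cocycleF S (fun x => ⇑(c x)) x p ⁻¹' B)) 2 μ := by
    intro p
    have hm := measurable_measure_inter_preimage_cocycleF (ν := ν) herg.measurable hA hB p
    refine .of_bound hm.ennreal_toReal.aestronglyMeasurable 1 (ae_of_all _ fun _ => ?_)
    rw [Real.norm_eq_abs, abs_of_nonneg measureReal_nonneg]
    exact measureReal_le_one (μ := ν)
  have h2 := herg.tendsto_cesaro_integral_measureReal_cocycleF_mul hA hA hB hB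
  have h1 := herg.tendsto_cesaro_integral_measureReal_cocycleF_mul hA .univ hB .univ
  simp only [preimage_univ, inter_univ, probReal_univ, mul_one] at h1
  convert tendsto_integral_cesaro_sq_sub hg (by convert h2 using 2; ring) h1 using 6 with N x p
  rw [← coe_cocycleEquiv, (measurePreserving_cocycleEquiv S hcp x p).measure_image_inter]
  rfl

/-- If the extension `R = (S, R_x)` is relatively weakly mixing, i.e.
`R ×_X R = (S, R_x × R_x)` is ergodic on `X × Y × Y` for `μ ⊗ ν ⊗ ν`, then for all
measurable `A, B ⊆ Y`,
`∫_X (1/N) Σ_{p=1}^N (ν(C(x,p)A ∩ B) − ν(A)ν(B))² dμ(x) → 0` as `N → ∞`. -/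
theorem relative_weak_mixing_cesaro
    {X Y : Type*} [MeasurableSpace X] [MeasurableSpace Y]
    (μ : Measure X) (ν : Measure Y) [IsProbabilityMeasure μ] [IsProbabilityMeasure ν]
    (S : X → X) (hSm : Measurable S) (hS : MeasurePreserving S μ μ)
    (c : X → Y ≃ᵐ Y) (hcm : Measurable fun p : X × Y => c p.1 p.2)
    (hcp : ∀ x, MeasurePreserving (c x) ν ν)
    (herg : Ergodic (fun q : X × Y × Y => (S q.1, c q.1 q.2.1, c q.1 q.2.2))
      (μ.prod (ν.prod ν))) :
    ∀ A B : Set Y, MeasurableSet A → MeasurableSet B →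
      Tendsto (fun N : ℕ => ∫ x, (N : ℝ)⁻¹ * ∑ p ∈ Finset.Icc 1 N,
          ((ν (cocycleF S (fun x => ⇑(c x)) x p '' A ∩ B)).toReal -
            (ν A).toReal * (ν B).toReal) ^ 2 ∂μ)
        atTop (nhds 0) :=
  relative_weak_mixing_cesaro_general μ ν S c hcp herg
end
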